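/- arXiv:2312.01198 — 11 statements merged into one kernel-verified Lean document; each statement's English description precedes it below -/
import Mathlib

section
/- If a linear order L₀ convexly embeds into a linear order L isomorphic to the rationals (ℚ, ≤), then L₀ is isomorphic to one of: the one-element order, ℚ, 1 + ℚ, ℚ + 1, or 1 + ℚ + 1. -/
/-!
A convex subset of `ℚ` is a countable dense linear order, so by Cantor's back-and-forth theorem
it is determined up to isomorphism by which of its endpoints exist: removing a least and a
greatest element, when present, leaves a nonempty countable dense order without endpoints,
which is isomorphic to `ℚ`.
-/

namespace Subtype

variable {α : Type*} [LinearOrder α]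

section Bot

variable [OrderBot α]

instance denselyOrdered_ne_bot [DenselyOrdered α] : DenselyOrdered {x : α // x ≠ ⊥} where
  dense x y hxy := by
    obtain ⟨z, hxz, hzy⟩ := exists_between (α := α) hxy
    exact ⟨⟨z, (bot_le.trans_lt hxz).ne'⟩, hxz, hzy⟩

instance noMinOrder_ne_bot [DenselyOrdered α] : NoMinOrder {x : α // x ≠ ⊥} where
  exists_lt x := by
    obtain ⟨z, hbz, hzx⟩ := exists_between (bot_lt_iff_ne_bot.mpr x.2)
    exact ⟨⟨z, hbz.ne'⟩, hzx⟩

instance noMaxOrder_ne_bot [NoMaxOrder α] : NoMaxOrder {x : α // x ≠ ⊥} where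
  exists_gt x := by
    obtain ⟨z, hxz⟩ := exists_gt (x : α)
    exact ⟨⟨z, (bot_le.trans_lt hxz).ne'⟩, hxz⟩

instance nonempty_ne_bot [Nontrivial α] : Nonempty {x : α // x ≠ ⊥} :=
  let ⟨x, hx⟩ := exists_ne (⊥ : α)
  ⟨⟨x, hx⟩⟩

end Bot

section Top

variable [OrderTop α]

instance denselyOrdered_ne_top [DenselyOrdered α] : DenselyOrdered {x : α // x ≠ ⊤} where
  dense x y hxy := by
    obtain ⟨z, hxz, hzy⟩ := exists_between (α := α) hxy
    exact ⟨⟨z, (hzy.trans_le le_top).ne⟩, hxz, hzy⟩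

instance noMaxOrder_ne_top [DenselyOrdered α] : NoMaxOrder {x : α // x ≠ ⊤} where
  exists_gt x := by
    obtain ⟨z, hxz, hzt⟩ := exists_between (lt_top_iff_ne_top.mpr x.2)
    exact ⟨⟨z, hzt.ne⟩, hxz⟩

instance nonempty_ne_top [Nontrivial α] : Nonempty {x : α // x ≠ ⊤} :=
  let ⟨x, hx⟩ := exists_ne (⊤ : α)
  ⟨⟨x, hx⟩⟩

end Top

end Subtype

section CountableDense

open Classical in
noncomputable def OrderIso.punitSumLexNeBot (α : Type*) [LinearOrder α] [OrderBot α] :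
    α ≃o PUnit ⊕ₗ {x : α // x ≠ ⊥} :=
  WithBot.subtypeOrderIso.symm.trans WithBot.orderIsoPUnitSumLex

open Classical in
noncomputable def OrderIso.neTopSumLexPUnit (α : Type*) [LinearOrder α] [OrderTop α] :
    α ≃o {x : α // x ≠ ⊤} ⊕ₗ PUnit :=
  WithTop.subtypeOrderIso.symm.trans WithTop.orderIsoSumLexPUnit

variable {α : Type*} [LinearOrder α] [Countable α] [DenselyOrdered α] [Nonempty α]

theorem Order.iso_rat_or_punitSumLex_rat_of_noMaxOrder [NoMaxOrder α] :
    Nonempty (α ≃o ℚ) ∨ Nonempty (α ≃o (PUnit ⊕ₗ ℚ)) := by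
  by_cases hmin : NoMinOrder α
  · exact Or.inl (Order.iso_of_countable_dense α ℚ)
  · obtain ⟨a, ha⟩ : ∃ a : α, ∀ x, a ≤ x := by
      simpa [noMinOrder_iff, not_isMin_iff] using hmin
    let : OrderBot α := { bot := a, bot_le := ha }
    obtain ⟨e⟩ := Order.iso_of_countable_dense {x : α // x ≠ ⊥} ℚ
    exact Or.inr ⟨(OrderIso.punitSumLexNeBot α).trans ((OrderIso.refl PUnit).sumLexCongr e)⟩

theorem Order.iso_punit_or_rat_or_sumLex_rat_of_countable_dense :
    Nonempty (α ≃o PUnit) ∨ Nonempty (α ≃o ℚ) ∨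
      Nonempty (α ≃o (PUnit ⊕ₗ ℚ)) ∨ Nonempty (α ≃o (ℚ ⊕ₗ PUnit)) ∨
      Nonempty (α ≃o (PUnit ⊕ₗ ℚ ⊕ₗ PUnit)) := by
  rcases subsingleton_or_nontrivial α with _ | _
  · let : Unique α := uniqueOfSubsingleton (Classical.arbitrary α)
    exact Or.inl ⟨OrderIso.ofUnique α PUnit⟩
  by_cases hmax : NoMaxOrder α
  · rcases Order.iso_rat_or_punitSumLex_rat_of_noMaxOrder (α := α) with h | h
    · exact Or.inr (Or.inl h)
    · exact Or.inr (Or.inr (Or.inl h))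
  obtain ⟨b, hb⟩ : ∃ b : α, ∀ x, x ≤ b := by
    simpa [noMaxOrder_iff, not_isMax_iff] using hmax
  let : OrderTop α := { top := b, le_top := hb }
  rcases Order.iso_rat_or_punitSumLex_rat_of_noMaxOrder (α := {x : α // x ≠ ⊤})
    with ⟨⟨e⟩⟩ | ⟨⟨e⟩⟩
  · exact Or.inr (Or.inr (Or.inr (Or.inl
      ⟨(OrderIso.neTopSumLexPUnit α).trans (e.sumLexCongr (.refl PUnit))⟩)))
  · exact Or.inr (Or.inr (Or.inr (Or.inr
      ⟨((OrderIso.neTopSumLexPUnit α).trans (e.sumLexCongr (.refl PUnit))).trans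
        (OrderIso.sumLexAssoc PUnit ℚ PUnit)⟩)))

end CountableDense

/-- If `L₀` convexly embeds into a linear order isomorphic to `ℚ`, then `L₀` is isomorphic to
one of `1`, `ℚ`, `1 + ℚ`, `ℚ + 1`, `1 + ℚ + 1`. -/
theorem stmt_0 {L₀ L : Type*} [LinearOrder L₀] [LinearOrder L] [Nonempty L₀]
    (hL : Nonempty (L ≃o ℚ)) (f : L₀ ↪o L) (hf : (Set.range ⇑f).OrdConnected) :
    Nonempty (L₀ ≃o PUnit) ∨ Nonempty (L₀ ≃o ℚ) ∨
      Nonempty (L₀ ≃o (PUnit ⊕ₗ ℚ)) ∨ Nonempty (L₀ ≃o (ℚ ⊕ₗ PUnit)) ∨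
      Nonempty (L₀ ≃o (PUnit ⊕ₗ ℚ ⊕ₗ PUnit)) := by
  obtain ⟨e⟩ := hL
  have : Countable L₀ := (f.trans e.toOrderEmbedding).injective.countable
  have : DenselyOrdered L := (denselyOrdered_iff_of_orderIsoClass e).mpr inferInstance
  have : DenselyOrdered L₀ :=
    (denselyOrdered_iff_of_orderIsoClass (f.strictMono.orderIso f)).mpr inferInstance
  exact Order.iso_punit_or_rat_or_sumLex_rat_of_countable_dense
end

section
/- Let ℒ be a class of countable linear orders downward closed under embeddability, and let L be a countable scattered linear order. Then L is ℒ-convexly embeddable into ℚ if and only if L is (isomorphic to an element) of ℒ. -/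
universe u v w x

/-- A `K`-convex partition of `L`: a partition of `L` into nonempty pieces indexed by `K`
such that `k < k'` iff every element of `P k` is below every element of `P k'`. -/
def IsConvexPartition {K : Type u} {L : Type v} [LinearOrder K] [LinearOrder L]
    (P : K → Set L) : Prop :=
  (∀ k, (P k).Nonempty) ∧ (∀ y : L, ∃! k, y ∈ P k) ∧
    ∀ k k' : K, k < k' ↔ ∀ a ∈ P k, ∀ b ∈ P k', a < b

/-- `ℒ`-convex embeddability: `L ⊴^ℒ L'` iff there are `K ∈ ℒ`, a `K`-convex partition of `L`,
and an order embedding of `L` into `L'` mapping each piece onto a convex set. -/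
def LCE (ℒ : Set LinOrd.{u}) (L : Type v) (L' : Type w)
    [LinearOrder L] [LinearOrder L'] : Prop :=
  ∃ K ∈ ℒ, ∃ P : ↥K → Set L, IsConvexPartition P ∧
    ∃ f : L ↪o L', ∀ k : ↥K, (⇑f '' P k).OrdConnected

/-- For a nonempty downward closed class `ℒ` of countable linear orders and a countable
scattered `L`, we have `L ⊴^ℒ ℚ` iff `L` is isomorphic to an element of `ℒ`. -/
theorem stmt_2 (ℒ : Set LinOrd.{0}) (hne : ℒ.Nonempty)
    (hmem : ∀ A ∈ ℒ, Nonempty ↥A ∧ Countable ↥A)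
    (hdc : ∀ A ∈ ℒ, ∀ B : LinOrd.{0}, Nonempty ↥B → Countable ↥B →
      Nonempty (↥B ↪o ↥A) → B ∈ ℒ)
    (L : Type) [LinearOrder L] [Nonempty L] [Countable L]
    (hscat : ¬ Nonempty (ℚ ↪o L)) :
    LCE ℒ L ℚ ↔ ∃ K ∈ ℒ, Nonempty (L ≃o ↥K) := by
  constructor
  · rintro ⟨K, hK, P, ⟨hPne, hPuniq, hPord⟩, f, hconv⟩
    -- each piece is a singleton, since `L` is scattered
    have haux : ∀ k : ↥K, ∀ a ∈ P k, ∀ b ∈ P k, ¬ a < b := by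
      intro k a ha b hb hab
      have hfab : f a < f b := f.lt_iff_lt.mpr hab
      have hIoo : Set.Ioo (f a) (f b) ⊆ ⇑f '' P k := fun q hq =>
        (hconv k).out ⟨a, ha, rfl⟩ ⟨b, hb, rfl⟩ ⟨hq.1.le, hq.2.le⟩
      obtain ⟨c, hc1, hc2⟩ := exists_between hfab
      obtain ⟨d, hd1, hd2⟩ := exists_between hc2
      have : Nontrivial ↥(Set.Ioo (f a) (f b)) :=
        ⟨⟨c, hc1, hc2⟩, ⟨d, hc1.trans hd1, hd2⟩, by
          intro h
          exact absurd (congrArg Subtype.val h) (ne_of_lt hd1)⟩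
      obtain ⟨g⟩ := Order.embedding_from_countable_to_dense ℚ ↥(Set.Ioo (f a) (f b))
      choose x hx1 hx2 using fun q : ℚ => hIoo (g q).2
      refine hscat ⟨OrderEmbedding.ofStrictMono x fun q q' h => ?_⟩
      have hg : (g q : ℚ) < (g q' : ℚ) := g.lt_iff_lt.mpr h
      rw [← hx2 q, ← hx2 q'] at hg
      exact f.lt_iff_lt.mp hg
    have hsing : ∀ k : ↥K, ∀ a ∈ P k, ∀ b ∈ P k, a = b := by
      intro k a ha b hb
      rcases lt_trichotomy a b with h | h | h
      · exact absurd h (haux k a ha b hb)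
      · exact h
      · exact absurd h (haux k b hb a ha)
    -- build the isomorphism
    refine ⟨K, hK, ?_⟩
    set ψ : ↥K → L := fun k => (hPne k).choose with hψdef
    have hψ : ∀ k, ψ k ∈ P k := fun k => (hPne k).choose_spec
    have hmono : StrictMono ψ := fun k k' h =>
      (hPord k k').mp h (ψ k) (hψ k) (ψ k') (hψ k')
    have hsurj : Function.Surjective ψ := by
      intro y
      obtain ⟨k, hk, -⟩ := hPuniq y
      exact ⟨k, hsing k (ψ k) (hψ k) y hk⟩
    exact ⟨(StrictMono.orderIsoOfSurjective ψ hmono hsurj).symm⟩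
  · rintro ⟨K, hK, ⟨e⟩⟩
    obtain ⟨f⟩ := Order.embedding_from_countable_to_dense L ℚ
    refine ⟨K, hK, fun k => {e.symm k}, ⟨fun k => ⟨e.symm k, rfl⟩, ?_, ?_⟩, f, ?_⟩
    · intro y
      refine ⟨e y, by simp, fun k hk => ?_⟩
      simp only [Set.mem_singleton_iff] at hk
      rw [hk]; simp
    · intro k k'
      constructor
      · rintro h a rfl b rfl
        exact e.symm.strictMono h
      · intro h
        have := h (e.symm k) rfl (e.symm k') rfl
        exact e.symm.lt_iff_lt.mp this
    · intro k
      rw [Set.image_singleton]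
      exact Set.ordConnected_singleton
end

section
/- Let ℒ, ℒ' be nonempty classes of countable linear orders, each downward closed under embeddability. Then ⊴^ℒ refines ⊴^{ℒ'} (i.e., L ⊴^ℒ L' implies L ⊴^{ℒ'} L' for all linear orders L, L') if and only if ℒ ⊆ ℒ' up to isomorphism. -/
universe u v w x

/-- `⊴^ℒ` refines `⊴^ℒ'`. -/
def Refines (ℒ ℒ' : Set LinOrd.{0}) : Prop :=
  ∀ (L : Type u) (L' : Type v) [LinearOrder L] [LinearOrder L'],
    LCE ℒ L L' → LCE ℒ' L L'

def uIso (α : Type x) [LinearOrder α] : ULift.{w} α ≃o α :=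
  { Equiv.ulift with map_rel_iff' := Iff.rfl }


/-- For nonempty downward closed classes of countable linear orders,
`⊴^ℒ` refines `⊴^ℒ'` iff `ℒ ⊆ ℒ'` up to isomorphism. -/
theorem stmt_3 (ℒ ℒ' : Set LinOrd.{0}) (hne : ℒ.Nonempty) (hne' : ℒ'.Nonempty)
    (hmem : ∀ A ∈ ℒ, Nonempty ↥A ∧ Countable ↥A)
    (hmem' : ∀ A ∈ ℒ', Nonempty ↥A ∧ Countable ↥A)
    (hdc : ∀ A ∈ ℒ, ∀ B : LinOrd.{0}, Nonempty ↥B → Countable ↥B →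
      Nonempty (↥B ↪o ↥A) → B ∈ ℒ)
    (hdc' : ∀ A ∈ ℒ', ∀ B : LinOrd.{0}, Nonempty ↥B → Countable ↥B →
      Nonempty (↥B ↪o ↥A) → B ∈ ℒ') :
    Refines.{u, v} ℒ ℒ' ↔ ∀ K ∈ ℒ, ∃ K' ∈ ℒ', Nonempty (↥K ≃o ↥K') := by
  constructor
  · intro href K hK
    obtain ⟨hKne, hKc⟩ := hmem K hK
    -- K embeds into ℝ
    obtain ⟨g⟩ : Nonempty (↥K ↪o ℝ) := Order.embedding_from_countable_to_dense _ _
    -- LCE ℒ (ULift K) (ULift ℝ)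
    have h1 : LCE ℒ (ULift.{u} ↥K) (ULift.{v} ℝ) := by
      refine ⟨K, hK, fun k => {ULift.up k}, ⟨fun k => ⟨ULift.up k, rfl⟩, ?_, ?_⟩, ?_⟩
      · intro y
        exact ⟨y.down, by simp, fun k hk => by
          simp only [Set.mem_singleton_iff] at hk; exact congrArg ULift.down hk.symm⟩
      · intro k k'
        constructor
        · rintro h a rfl b rfl
          exact h
        · intro h
          exact h _ rfl _ rfl
      · refine ⟨(uIso.{u} ↥K).toOrderEmbedding.trans
          (g.trans (uIso.{v} ℝ).symm.toOrderEmbedding), fun k => ?_⟩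
        simp only [Set.image_singleton]
        exact Set.ordConnected_singleton
    obtain ⟨K', hK', P', hP', f', hf'⟩ := href _ _ h1
    haveI := hKc
    haveI : Countable (ULift.{u} ↥K) := inferInstance
    -- Each piece is a singleton
    have hsing : ∀ k' (a b : ULift.{u} ↥K), a ∈ P' k' → b ∈ P' k' → a = b := by
      intro k' a b ha hb
      by_contra hab
      wlog hlt : a < b generalizing a b
      · exact this b a hb ha (Ne.symm hab) (lt_of_le_of_ne (not_lt.1 hlt) (Ne.symm hab))
      have hflt : f' a < f' b := f'.strictMono hlt
      have hsub : Set.Icc (f' a) (f' b) ⊆ ⇑f' '' P' k' :=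
        (hf' k').out ⟨a, ha, rfl⟩ ⟨b, hb, rfl⟩
      have hcnt : (⇑f' '' P' k').Countable := ((P' k').to_countable).image _
      have hcnt2 : (Set.Icc (f' a) (f' b)).Countable := hcnt.mono hsub
      have hcnt3 : (Set.Icc (f' a).down (f' b).down).Countable := by
        have heq : Set.Icc (f' a).down (f' b).down = ULift.down '' Set.Icc (f' a) (f' b) := by
          ext x
          simp only [Set.mem_image, Set.mem_Icc]
          constructor
          · rintro ⟨h1, h2⟩
            exact ⟨ULift.up x, ⟨h1, h2⟩, rfl⟩
          · rintro ⟨y, ⟨h1, h2⟩, rfl⟩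
            exact ⟨h1, h2⟩
        rw [heq]
        exact hcnt2.image _
      have hltr : (f' a).down < (f' b).down := hflt
      haveI := hcnt3.to_subtype
      have hle : Cardinal.mk (Set.Icc (f' a).down (f' b).down) ≤ Cardinal.aleph0 :=
        Cardinal.mk_le_aleph0
      rw [Cardinal.mk_Icc_real hltr] at hle
      exact Cardinal.aleph0_lt_continuum.not_ge hle
    -- build order iso
    classical
    have hex : ∀ y : ULift.{u} ↥K, ∃! k, y ∈ P' k := hP'.2.1
    let h : ULift.{u} ↥K → ↥K' := fun y => (hex y).choose
    have hh : ∀ y, y ∈ P' (h y) := fun y => (hex y).choose_spec.1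
    have hinj : Function.Injective h := by
      intro a b hab
      exact hsing (h a) a b (hh a) (hab ▸ hh b)
    have hsurj : Function.Surjective h := by
      intro k
      obtain ⟨y, hy⟩ := hP'.1 k
      exact ⟨y, ((hex y).choose_spec.2 k hy).symm⟩
    have hmono : StrictMono h := by
      intro a b hab
      rcases lt_trichotomy (h a) (h b) with h1 | h1 | h1
      · exact h1
      · exact absurd (hinj h1) (ne_of_lt hab)
      · exact absurd ((hP'.2.2 _ _).1 h1 b (hh b) a (hh a)) (asymm hab)
    have e1 : ULift.{u} ↥K ≃o ↥K' := hmono.orderIsoOfSurjective h hsurj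
    exact ⟨K', hK', ⟨(uIso.{u} ↥K).symm.trans e1⟩⟩
  · intro hsub L L' _ _ hLCE
    obtain ⟨K, hK, P, hP, f, hf⟩ := hLCE
    obtain ⟨K', hK', ⟨e⟩⟩ := hsub K hK
    refine ⟨K', hK', fun k' => P (e.symm k'), ⟨fun k' => hP.1 _, ?_, ?_⟩,
      f, fun k' => hf _⟩
    · intro y
      obtain ⟨k, hk, hk2⟩ := hP.2.1 y
      refine ⟨e k, by simpa using hk, fun k' hk' => ?_⟩
      have := hk2 _ hk'
      rw [← this]
      simp
    · intro k k'
      rw [← OrderIso.lt_iff_lt e.symm]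
      exact hP.2.2 _ _
end

section
/- For the class ℒ of all linear orders with at most 2 elements, the relation ⊴^ℒ is not transitive: with ζ = (ℤ, ≤), one has ζ·3 ⊴^ℒ ζ + 1 + ζ·2 and ζ + 1 + ζ·2 ⊴^ℒ (ζ + 1)·3, but ζ·3 is not ⊴^ℒ-below (ζ + 1)·3. -/
universe u v w x

/-! A partition of `ζ·3` into at most two convex pieces has a piece `S` meeting two of the three
copies of `ζ`. Suppose an embedding `f` of `ζ·3` into `(ζ+1)·3` maps `S` onto a convex set. Each
point of `S` has an immediate successor or predecessor in `S`, and `f` preserves such covering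
pairs within `S`; the points `1` of `(ζ+1)·3` belong to no covering pair, so `f(S)` avoids them
and therefore lies in a single copy of `ζ`, where intervals are finite. But `S` contains the
infinite interval between its points in different copies. -/

open Set Function

section ConvexPartition

variable {K : Type u} {L : Type v} [LinearOrder K] [LinearOrder L]

theorem IsConvexPartition.ordConnected {P : K → Set L} (hP : IsConvexPartition P) (k : K) :
    (P k).OrdConnected := by
  refine ⟨fun a ha b hb c hc => ?_⟩
  obtain ⟨k', hk', -⟩ := hP.2.1 c
  rcases lt_trichotomy k k' with h | rfl | h
  · exact absurd ((hP.2.2 k k').1 h b hb c hk') (not_lt.2 hc.2)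
  · exact hk'
  · exact absurd ((hP.2.2 k' k).1 h c hk' a ha) (not_lt.2 hc.1)

theorem isConvexPartition_fibers {c : L → K} (hc : Monotone c) (hs : Surjective c) :
    IsConvexPartition fun k => c ⁻¹' {k} := by
  refine ⟨hs, fun y => ⟨c y, rfl, fun k hk => hk.symm⟩, fun k k' => ⟨?_, fun h => ?_⟩⟩
  · rintro h a rfl b rfl
    exact lt_of_not_ge fun hba => (hc hba).not_gt h
  · obtain ⟨a, rfl⟩ := hs k
    obtain ⟨b, rfl⟩ := hs k'
    refine (hc (h a rfl b rfl).le).lt_of_ne fun hab => ?_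
    exact lt_irrefl a (h a rfl a hab)

end ConvexPartition

theorem lce_of_monotone_of_surjective {ℒ : Set LinOrd.{u}} {K : LinOrd.{u}} (hK : K ∈ ℒ)
    {L : Type v} {L' : Type w} [LinearOrder L] [LinearOrder L'] (c : L → K) (hc : Monotone c)
    (hs : Surjective c) (f : L ↪o L') (hf : ∀ k, (f '' (c ⁻¹' {k})).OrdConnected) :
    LCE ℒ L L' :=
  ⟨K, hK, _, isConvexPartition_fibers hc hs, f, hf⟩

theorem OrderEmbedding.covBy_of_ordConnected_image {α β : Type*} [Preorder α] [Preorder β]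
    (f : α ↪o β) {S : Set α} (hS : (f '' S).OrdConnected) {a b : α} (ha : a ∈ S) (hb : b ∈ S)
    (hab : a ⋖ b) : f a ⋖ f b := by
  refine ⟨f.lt_iff_lt.2 hab.1, fun c hac hcb => ?_⟩
  obtain ⟨d, -, rfl⟩ := hS.out ⟨a, ha, rfl⟩ ⟨b, hb, rfl⟩ ⟨hac.le, hcb.le⟩
  exact hab.2 (f.lt_iff_lt.1 hac) (f.lt_iff_lt.1 hcb)

theorem Set.OrdConnected.exists_covBy_mem {α : Type*} [LinearOrder α]
    (hsucc : ∀ a : α, ∃ b, a ⋖ b) (hpred : ∀ a : α, ∃ b, b ⋖ a) {S : Set α} (hS : S.OrdConnected)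
    {x y : α} (hx : x ∈ S) (hy : y ∈ S) (hxy : x < y) {a : α} (ha : a ∈ S) :
    ∃ b ∈ S, a ⋖ b ∨ b ⋖ a := by
  rcases lt_or_ge a y with hay | hya
  · obtain ⟨b, hab⟩ := hsucc a
    exact ⟨b, hS.out ha hy ⟨hab.le, hab.ge_of_gt hay⟩, .inl hab⟩
  · obtain ⟨b, hba⟩ := hpred a
    exact ⟨b, hS.out hx ha ⟨hba.le_of_lt (hxy.trans_le hya), hba.le⟩, .inr hba⟩

theorem Prod.Lex.Icc_infinite_of_fst_lt {α β : Type*} [Preorder α] [Preorder β] [NoMaxOrder β]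
    {x y : α ×ₗ β} (h : (ofLex x).1 < (ofLex y).1) : (Icc x y).Infinite := by
  have hinj : InjOn (fun b => toLex ((ofLex x).1, b)) (Ici (ofLex x).2) :=
    fun b _ b' _ hb => congrArg (fun p => (ofLex p).2) hb
  refine ((Ici_infinite (ofLex x).2).image hinj).mono ?_
  rintro _ ⟨b, hb, rfl⟩
  exact ⟨Prod.Lex.toLex_le_toLex.2 (.inr ⟨rfl, hb⟩), Prod.Lex.toLex_le_toLex.2 (.inl h)⟩

section GapPoints

variable {α : Type*} [LinearOrder α]

def gapPoint (k : α) : α ×ₗ (ℤ ⊕ₗ PUnit) := toLex (k, toLex (Sum.inr PUnit.unit))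

theorem not_covBy_toLex_inr_unit (b : ℤ ⊕ₗ PUnit) : ¬b ⋖ toLex (Sum.inr PUnit.unit) := by
  rcases b with z | u
  · exact fun h => h.2 (c := toLex (Sum.inl (z + 1)))
      (Sum.Lex.inl_lt_inl_iff.2 (lt_add_one z)) (Sum.Lex.inl_lt_inr _ _)
  · exact fun h => h.lt.ne rfl

theorem not_covBy_gapPoint (x : α ×ₗ (ℤ ⊕ₗ PUnit)) (k : α) : ¬x ⋖ gapPoint k := by
  rw [Prod.Lex.covBy_iff]
  rintro (⟨-, h⟩ | ⟨-, -, h⟩)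
  · exact not_covBy_toLex_inr_unit _ h
  · exact not_isMin _ h

theorem gapPoint_not_covBy (k : α) (y : α ×ₗ (ℤ ⊕ₗ PUnit)) : ¬gapPoint k ⋖ y := by
  rw [Prod.Lex.covBy_iff]
  rintro (⟨-, h⟩ | ⟨-, -, h⟩)
  · rcases hy : (ofLex y).2 with z | u
    · exact Sum.Lex.not_inr_lt_inl (hy ▸ h.lt)
    · exact (hy ▸ h.lt).ne rfl
  · exact not_isMin _ h

theorem finite_Icc_of_forall_gapPoint_notMem {u v : α ×ₗ (ℤ ⊕ₗ PUnit)}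
    (h : ∀ k, gapPoint k ∉ Icc u v) : (Icc u v).Finite := by
  obtain ⟨⟨i, a⟩, rfl⟩ := toLex.surjective u
  obtain ⟨⟨j, b⟩, rfl⟩ := toLex.surjective v
  by_cases huv : toLex (i, a) ≤ toLex (j, b)
  swap
  · rw [Icc_eq_empty huv]
    exact finite_empty
  rcases Prod.Lex.toLex_le_toLex.1 huv with hij | ⟨rfl, hab⟩
  · refine absurd ⟨Prod.Lex.toLex_le_toLex.2 (.inr ⟨rfl, ?_⟩),
      Prod.Lex.toLex_le_toLex.2 (.inl hij)⟩ (h i)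
    rcases a with m | u
    exacts [Sum.Lex.inl_le_inr _ _, le_rfl]
  rcases b with n | u
  swap
  · exact absurd (right_mem_Icc.2 huv) (h i)
  rcases a with m | u
  swap
  · exact absurd (left_mem_Icc.2 huv) (h i)
  refine ((finite_Icc m n).image fun z => toLex (i, toLex (Sum.inl z))).subset ?_
  rintro t ⟨hl, hr⟩
  obtain ⟨⟨l, c⟩, rfl⟩ := toLex.surjective t
  rcases Prod.Lex.toLex_le_toLex.1 hl with hil | ⟨rfl, hmc⟩
  · rcases Prod.Lex.toLex_le_toLex.1 hr with hli | ⟨rfl, -⟩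
    exacts [absurd hil hli.not_gt, absurd hil (lt_irrefl _)]
  rcases Prod.Lex.toLex_le_toLex.1 hr with hli | ⟨-, hcn⟩
  · exact absurd hli (lt_irrefl _)
  rcases c with z | u
  · exact ⟨z, ⟨Sum.Lex.inl_le_inl_iff.1 hmc, Sum.Lex.inl_le_inl_iff.1 hcn⟩, rfl⟩
  · exact absurd hcn Sum.Lex.not_inr_le_inl

end GapPoints

section IntCopies

variable {α : Type*} [Preorder α]

theorem Prod.Lex.covBy_add_one (x : α ×ₗ ℤ) : x ⋖ toLex ((ofLex x).1, (ofLex x).2 + 1) :=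
  Prod.Lex.covBy_iff.2 (.inl ⟨rfl, Order.covBy_add_one _⟩)

theorem Prod.Lex.sub_one_covBy (x : α ×ₗ ℤ) : toLex ((ofLex x).1, (ofLex x).2 - 1) ⋖ x :=
  Prod.Lex.covBy_iff.2 (.inl ⟨rfl, Order.sub_one_covBy _⟩)

end IntCopies

theorem fst_eq_of_ordConnected_image {α α' : Type*} [LinearOrder α] [LinearOrder α']
    (f : α ×ₗ ℤ ↪o α' ×ₗ (ℤ ⊕ₗ PUnit)) {S : Set (α ×ₗ ℤ)} (hS : S.OrdConnected)
    (hfS : (f '' S).OrdConnected) {x y : α ×ₗ ℤ} (hx : x ∈ S) (hy : y ∈ S) :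
    (ofLex x).1 = (ofLex y).1 := by
  wlog hxy : x < y generalizing x y
  · rcases (not_lt.1 hxy).eq_or_lt with rfl | hyx
    · rfl
    · exact (this hy hx hyx).symm
  by_contra hne
  have hlt : (ofLex x).1 < (ofLex y).1 := (Prod.Lex.monotone_fst_ofLex hxy.le).lt_of_ne hne
  have hgap : ∀ k, gapPoint k ∉ f '' S := by
    rintro k ⟨a, ha, hak⟩
    obtain ⟨b, hb, hab | hba⟩ := hS.exists_covBy_mem (fun a => ⟨_, Prod.Lex.covBy_add_one a⟩)
      (fun a => ⟨_, Prod.Lex.sub_one_covBy a⟩) hx hy hxy ha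
    · exact gapPoint_not_covBy k (f b) (hak ▸ f.covBy_of_ordConnected_image hfS ha hb hab)
    · exact not_covBy_gapPoint (f b) k (hak ▸ f.covBy_of_ordConnected_image hfS hb ha hba)
  have hfin : (Icc (f x) (f y)).Finite :=
    finite_Icc_of_forall_gapPoint_notMem fun k hk => hgap k (hfS.out ⟨x, hx, rfl⟩ ⟨y, hy, rfl⟩ hk)
  refine ((Prod.Lex.Icc_infinite_of_fst_lt hlt).image f.injective.injOn) (hfin.subset ?_)
  exact image_subset_iff.2 fun c hc => ⟨f.monotone hc.1, f.monotone hc.2⟩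

theorem not_lce_lex_fin_three_int {ℒ : Set LinOrd.{u}} (hℒ : ∀ K ∈ ℒ, Nonempty (↥K ↪ Fin 2))
    (α : Type v) [LinearOrder α] : ¬LCE ℒ (Fin 3 ×ₗ ℤ) (α ×ₗ (ℤ ⊕ₗ PUnit)) := by
  rintro ⟨K, hK, P, hP, f, hf⟩
  obtain ⟨e⟩ := hℒ K hK
  choose piece hpiece using fun y => (hP.2.1 y).exists
  obtain ⟨i, j, hij, hpij⟩ := Fintype.exists_ne_map_eq_of_card_lt
    (fun i : Fin 3 => e (piece (toLex (i, 0)))) (by simp)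
  have hmem := e.injective hpij ▸ hpiece (toLex (j, 0))
  exact hij (fst_eq_of_ordConnected_image f (hP.ordConnected _) (hf _) (hpiece _) hmem)

def lexPiece (x : Fin 3 ×ₗ ℤ) : Fin 2 := if (ofLex x).1 = 0 then 0 else 1

def toSumWithGap (x : Fin 3 ×ₗ ℤ) : ℤ ⊕ₗ PUnit ⊕ₗ (Fin 2 ×ₗ ℤ) :=
  match ofLex x with
  | (0, z) => toLex (.inl z)
  | (1, z) => toLex (.inr (toLex (.inr (toLex (0, z)))))
  | (2, z) => toLex (.inr (toLex (.inr (toLex (1, z)))))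

theorem monotone_lexPiece : Monotone lexPiece := by
  simp only [Monotone, Lex.forall, Prod.forall, Fin.forall_fin_succ]
  simp [lexPiece, Prod.Lex.toLex_le_toLex]

theorem surjective_lexPiece : Surjective lexPiece :=
  Fin.forall_fin_two.2 ⟨⟨toLex (0, 0), rfl⟩, ⟨toLex (1, 0), rfl⟩⟩

theorem strictMono_toSumWithGap : StrictMono toSumWithGap := by
  simp only [StrictMono, Lex.forall, Prod.forall, Fin.forall_fin_succ]
  simp [toSumWithGap, Prod.Lex.toLex_lt_toLex]

theorem toSumWithGap_image_lexPiece_zero :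
    toSumWithGap '' (lexPiece ⁻¹' {0}) = Iio (toLex (.inr (toLex (.inl PUnit.unit)))) := by
  ext t
  induction t with | h t => ?_
  rcases t with z | t
  · simp [toSumWithGap, lexPiece, Lex.exists]
  induction t with | h t => ?_
  rcases t with u | p <;> simp [toSumWithGap, lexPiece, Lex.exists]

theorem toSumWithGap_image_lexPiece_one :
    toSumWithGap '' (lexPiece ⁻¹' {1}) = Ioi (toLex (.inr (toLex (.inl PUnit.unit)))) := by
  ext t
  induction t with | h t => ?_
  rcases t with z | t
  · simp [toSumWithGap, lexPiece, Lex.exists, Fin.exists_fin_succ]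
  induction t with | h t => ?_
  rcases t with u | p
  · simp [toSumWithGap, lexPiece, Lex.exists, Fin.exists_fin_succ]
  · induction p with | h p => ?_
    obtain ⟨i, z⟩ := p
    fin_cases i <;> simp [toSumWithGap, lexPiece, Lex.exists, Fin.exists_fin_succ]

theorem lce_toSumWithGap {ℒ : Set LinOrd.{0}} (hℒ : LinOrd.of (Fin 2) ∈ ℒ) :
    LCE ℒ (Fin 3 ×ₗ ℤ) (ℤ ⊕ₗ PUnit ⊕ₗ (Fin 2 ×ₗ ℤ)) := by
  refine lce_of_monotone_of_surjective hℒ lexPiece monotone_lexPiece surjective_lexPiece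
    (.ofStrictMono _ strictMono_toSumWithGap) ?_
  simp only [Fin.forall_fin_two, OrderEmbedding.coe_ofStrictMono,
    toSumWithGap_image_lexPiece_zero, toSumWithGap_image_lexPiece_one]
  exact ⟨ordConnected_Iio, ordConnected_Ioi⟩

def sumPiece (x : ℤ ⊕ₗ PUnit ⊕ₗ (Fin 2 ×ₗ ℤ)) : Fin 2 :=
  match ofLex x with
  | .inl _ => 0
  | .inr y =>
    match ofLex y with
    | .inl _ => 0
    | .inr p => (ofLex p).1

def sumToLexWithGaps (x : ℤ ⊕ₗ PUnit ⊕ₗ (Fin 2 ×ₗ ℤ)) : Fin 3 ×ₗ (ℤ ⊕ₗ PUnit) :=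
  match ofLex x with
  | .inl z => toLex (0, toLex (.inl z))
  | .inr y =>
    match ofLex y with
    | .inl _ => toLex (0, toLex (.inr PUnit.unit))
    | .inr p => toLex ((ofLex p).1.succ, toLex (.inl (ofLex p).2))

theorem monotone_sumPiece : Monotone sumPiece := by
  simp only [Monotone, Lex.forall, Sum.forall, Prod.forall, Fin.forall_fin_succ]
  simp [sumPiece, Prod.Lex.toLex_le_toLex]

theorem surjective_sumPiece : Surjective sumPiece := by
  simp [Surjective, Lex.exists, Sum.exists, sumPiece]

theorem strictMono_sumToLexWithGaps : StrictMono sumToLexWithGaps := by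
  simp only [StrictMono, Lex.forall, Sum.forall, Prod.forall, Fin.forall_fin_succ]
  simp [sumToLexWithGaps, Prod.Lex.toLex_lt_toLex]

theorem sumToLexWithGaps_image_sumPiece_zero :
    sumToLexWithGaps '' (sumPiece ⁻¹' {0}) = Iio (toLex (1, toLex (.inr PUnit.unit))) := by
  ext t
  induction t with | h t => ?_
  obtain ⟨i, t⟩ := t
  induction t with | h t => ?_
  fin_cases i <;> rcases t with z | u <;>
    simp [sumToLexWithGaps, sumPiece, Prod.Lex.toLex_lt_toLex, Lex.exists, Sum.exists]

theorem sumToLexWithGaps_image_sumPiece_one :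
    sumToLexWithGaps '' (sumPiece ⁻¹' {1}) =
      Ioo (toLex (1, toLex (.inr PUnit.unit))) (toLex (2, toLex (.inr PUnit.unit))) := by
  ext t
  induction t with | h t => ?_
  obtain ⟨i, t⟩ := t
  induction t with | h t => ?_
  fin_cases i <;> rcases t with z | u <;>
    simp [sumToLexWithGaps, sumPiece, Prod.Lex.toLex_lt_toLex, Lex.exists, Sum.exists]

theorem lce_sumToLexWithGaps {ℒ : Set LinOrd.{0}} (hℒ : LinOrd.of (Fin 2) ∈ ℒ) :
    LCE ℒ (ℤ ⊕ₗ PUnit ⊕ₗ (Fin 2 ×ₗ ℤ)) (Fin 3 ×ₗ (ℤ ⊕ₗ PUnit)) := by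
  refine lce_of_monotone_of_surjective hℒ sumPiece monotone_sumPiece surjective_sumPiece
    (.ofStrictMono _ strictMono_sumToLexWithGaps) ?_
  simp only [Fin.forall_fin_two, OrderEmbedding.coe_ofStrictMono,
    sumToLexWithGaps_image_sumPiece_zero, sumToLexWithGaps_image_sumPiece_one]
  exact ⟨ordConnected_Iio, ordConnected_Ioo⟩

/-- For the class of linear orders with at most two elements, `⊴^ℒ` is not transitive:
`ζ·3 ⊴^ℒ ζ + 1 + ζ·2 ⊴^ℒ (ζ+1)·3` but `ζ·3` is not `⊴^ℒ`-below `(ζ+1)·3`. -/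
theorem stmt_4 :
    LCE {A : LinOrd.{0} | Nonempty ↥A ∧ Nonempty (↥A ↪ Fin 2)}
        (Fin 3 ×ₗ ℤ) (ℤ ⊕ₗ PUnit ⊕ₗ (Fin 2 ×ₗ ℤ)) ∧
      LCE {A : LinOrd.{0} | Nonempty ↥A ∧ Nonempty (↥A ↪ Fin 2)}
        (ℤ ⊕ₗ PUnit ⊕ₗ (Fin 2 ×ₗ ℤ)) (Fin 3 ×ₗ (ℤ ⊕ₗ PUnit)) ∧
      ¬ LCE {A : LinOrd.{0} | Nonempty ↥A ∧ Nonempty (↥A ↪ Fin 2)}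
        (Fin 3 ×ₗ ℤ) (Fin 3 ×ₗ (ℤ ⊕ₗ PUnit)) := by
  have hℒ : LinOrd.of (Fin 2) ∈ {A : LinOrd.{0} | Nonempty ↥A ∧ Nonempty (↥A ↪ Fin 2)} :=
    ⟨⟨0⟩, ⟨Embedding.refl _⟩⟩
  exact ⟨lce_toSumWithGap hℒ, lce_sumToLexWithGaps hℒ,
    not_lce_lex_fin_three_int (fun _ hK => hK.2) (Fin 3)⟩
end

section
/- Let ℒ be a class of linear orders downward closed under embeddability, and let L, L', M be linear orders with M ∉ ℒ (up to isomorphism). If L·M ⊴^ℒ L', then L convexly embeds into L'. -/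
universe u v w x

/-!
Let `P` be the `K`-convex partition witnessing `L·M ⊴^ℒ L'`. If some copy `{m} × L` of `L` lies
inside a single piece, the embedding maps that copy onto a convex subset of the convex image of the
piece, which is the required convex copy of `L` in `L'`. Otherwise every copy meets two pieces
`lo m < hi m`, and since the pieces are ordered like `K`, `m ↦ hi m` embeds `M` into `K`; by
downward closure `M` would then be isomorphic to a member of `ℒ`.
-/

open Set

theorem Set.OrdConnected.image_orderEmbedding_of_subset {α β : Type*} [Preorder α] [Preorder β]
    (f : α ↪o β) {S T : Set α} (hT : T.OrdConnected) (hTS : T ⊆ S)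
    (hS : (f '' S).OrdConnected) : (f '' T).OrdConnected := by
  refine ⟨?_⟩
  rintro _ ⟨a, ha, rfl⟩ _ ⟨b, hb, rfl⟩ z hz
  obtain ⟨c, -, rfl⟩ := hS.out (mem_image_of_mem f (hTS ha)) (mem_image_of_mem f (hTS hb)) hz
  exact mem_image_of_mem f (hT.out ha hb ⟨f.le_iff_le.mp hz.1, f.le_iff_le.mp hz.2⟩)

namespace Prod.Lex

variable {α β : Type*} [PartialOrder α] [PartialOrder β]

def fiberEmbedding (a : α) : β ↪o α ×ₗ β :=
  OrderEmbedding.ofMapLEIff (fun b ↦ toLex (a, b)) fun _ _ ↦ by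
    simp [Prod.Lex.toLex_le_toLex]

theorem range_fiberEmbedding (a : α) :
    range (fiberEmbedding (β := β) a) = (fun p : α ×ₗ β ↦ (ofLex p).1) ⁻¹' {a} := by
  ext p
  constructor
  · rintro ⟨b, rfl⟩
    rfl
  · intro hp
    rw [mem_preimage, mem_singleton_iff] at hp
    exact ⟨(ofLex p).2, by rw [← hp]; rfl⟩

theorem ordConnected_range_fiberEmbedding (a : α) :
    (range (fiberEmbedding (β := β) a)).OrdConnected := by
  rw [range_fiberEmbedding]
  exact ordConnected_singleton.preimage_mono monotone_fst_ofLex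

end Prod.Lex

namespace IsConvexPartition

variable {K : Type u} {L : Type v} [LinearOrder K] [LinearOrder L] {P : K → Set L}

theorem exists_mem (hP : IsConvexPartition P) (y : L) : ∃ k, y ∈ P k :=
  (hP.2.1 y).exists

theorem le_of_lt_of_mem (hP : IsConvexPartition P) {y y' : L} {k k' : K} (hy : y ∈ P k)
    (hy' : y' ∈ P k') (hlt : y < y') : k ≤ k' :=
  not_lt.mp fun h ↦ hlt.asymm ((hP.2.2 k' k).mp h y' hy' y hy)

end IsConvexPartition

theorem IsConvexPartition.exists_strictMono_of_forall_not_subset {K α β : Type*} [LinearOrder K] [LinearOrder α] [LinearOrder β] [Nonempty β]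
    {P : K → Set (α ×ₗ β)} (hP : IsConvexPartition P)
    (hsplit : ∀ a k, ∃ b, toLex (a, b) ∉ P k) : ∃ g : α → K, StrictMono g := by
  obtain ⟨b₀⟩ := ‹Nonempty β›
  have hpieces : ∀ a, ∃ k k' : K, ∃ b b' : β,
      k < k' ∧ toLex (a, b) ∈ P k ∧ toLex (a, b') ∈ P k' := by
    intro a
    obtain ⟨k₀, hk₀⟩ := hP.exists_mem (toLex (a, b₀))
    obtain ⟨b, hb⟩ := hsplit a k₀
    obtain ⟨k₁, hk₁⟩ := hP.exists_mem (toLex (a, b))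
    have hne : k₁ ≠ k₀ := fun e ↦ hb (e ▸ hk₁)
    rcases hne.lt_or_gt with h | h
    · exact ⟨k₁, k₀, b, b₀, h, hk₁, hk₀⟩
    · exact ⟨k₀, k₁, b₀, b, h, hk₀, hk₁⟩
  choose lo hi b b' hlt hlo hhi using hpieces
  refine ⟨hi, fun a a' haa' ↦ ?_⟩
  have hle : hi a ≤ lo a' :=
    hP.le_of_lt_of_mem (hhi a) (hlo a') (Prod.Lex.toLex_lt_toLex.mpr (Or.inl haa'))
  exact hle.trans_lt (hlt a')

theorem exists_orderIso_mem_of_strictMono {ℒ : Set LinOrd.{u}}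
    (hdc : ∀ A ∈ ℒ, ∀ B : LinOrd.{u}, Nonempty ↥B → Nonempty (↥B ↪o ↥A) → B ∈ ℒ)
    {K : LinOrd.{u}} (hK : K ∈ ℒ) {M : Type x} [LinearOrder M] [Nonempty M]
    {g : M → K} (hg : StrictMono g) : ∃ A ∈ ℒ, Nonempty (↥A ≃o M) :=
  ⟨LinOrd.of (range g),
    hdc K hK _ ⟨⟨g (Classical.arbitrary M), mem_range_self _⟩⟩ ⟨OrderEmbedding.subtype _⟩,
    ⟨(hg.orderIso g).symm⟩⟩

/-- If `M ∉ ℒ` (up to isomorphism) and `L·M ⊴^ℒ L'`, then `L` convexly embeds into `L'`. -/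
theorem stmt_8 (ℒ : Set LinOrd.{u})
    (hdc : ∀ A ∈ ℒ, ∀ B : LinOrd.{u}, Nonempty ↥B → Nonempty (↥B ↪o ↥A) → B ∈ ℒ)
    {L : Type v} {L' : Type w} {M : Type x}
    [LinearOrder L] [LinearOrder L'] [LinearOrder M] [Nonempty M]
    (hM : ¬ ∃ A ∈ ℒ, Nonempty (↥A ≃o M))
    (h : LCE ℒ (M ×ₗ L) L') :
    ∃ f : L ↪o L', (Set.range ⇑f).OrdConnected := by
  cases isEmpty_or_nonempty L
  · exact ⟨OrderEmbedding.ofIsEmpty, by simp only [range_eq_empty, ordConnected_empty]⟩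
  obtain ⟨K, hK, P, hP, f, hconv⟩ := h
  by_cases hfiber : ∃ m k, ∀ l : L, toLex (m, l) ∈ P k
  · obtain ⟨m, k, hk⟩ := hfiber
    have hsub : range (Prod.Lex.fiberEmbedding m) ⊆ P k := by
      rintro _ ⟨l, rfl⟩
      exact hk l
    refine ⟨(Prod.Lex.fiberEmbedding m).trans f, ?_⟩
    rw [RelEmbedding.coe_trans, range_comp]
    exact (Prod.Lex.ordConnected_range_fiberEmbedding m).image_orderEmbedding_of_subset f hsub
      (hconv k)
  · push Not at hfiber
    obtain ⟨g, hg⟩ := hP.exists_strictMono_of_forall_not_subset hfiber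
    exact (hM (exists_orderIso_mem_of_strictMono hdc hK hg)).elim
end

section
/- Let ℒ be a class of scattered linear orders downward closed under embeddability. Then for all linear orders L and L', L·ℚ ⊴^ℒ L' if and only if L·ℚ convexly embeds into L'. -/
/-!
If `ℚ ×ₗ L` is partitioned into convex pieces indexed by an order `K` into which `ℚ` does not
embed, then the piece containing `(q, l₀)` depends monotonically but not injectively on `q`, so
some `(a, l₀)` and `(b, l₀)` with `a < b` share a piece `P k`; by convexity `P k` contains the
whole band `Ioo a b ×ₗ L`. This band is a convex copy of `ℚ ×ₗ L` (as `Ioo a b ≃o ℚ`), so its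
image is convex inside the convex image of `P k`. Conversely a convex embedding is an
`ℒ`-convex embedding for the trivial partition, indexed by the one-point order, which lies in
`ℒ` by downward closure.
-/

universe u v w x

open Set

namespace IsConvexPartition

variable {K α : Type*} [LinearOrder K] [LinearOrder α] {P : K → Set α}

noncomputable def index (hP : IsConvexPartition P) (x : α) : K :=
  (hP.2.1 x).exists.choose

theorem mem_index (hP : IsConvexPartition P) (x : α) : x ∈ P (hP.index x) :=
  (hP.2.1 x).exists.choose_spec

theorem index_eq_of_mem (hP : IsConvexPartition P) {x : α} {k : K} (hx : x ∈ P k) :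
    hP.index x = k :=
  (hP.2.1 x).unique (hP.mem_index x) hx

theorem monotone_index (hP : IsConvexPartition P) : Monotone hP.index := by
  intro x y hxy
  by_contra! hlt
  exact ((hP.2.2 _ _).1 hlt y (hP.mem_index y) x (hP.mem_index x)).not_ge hxy

theorem ordConnected_s9 (hP : IsConvexPartition P) (k : K) : (P k).OrdConnected := by
  refine ⟨fun x hx z hz y hy => ?_⟩
  have hxy := hP.monotone_index hy.1
  have hyz := hP.monotone_index hy.2
  rw [hP.index_eq_of_mem hx] at hxy
  rw [hP.index_eq_of_mem hz] at hyz
  exact le_antisymm hyz hxy ▸ hP.mem_index y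

end IsConvexPartition

theorem Monotone.exists_lt_apply_eq {α K : Type*} [LinearOrder α] [PartialOrder K] {φ : α → K}
    (hφ : Monotone φ) (hK : ¬ Nonempty (α ↪o K)) : ∃ a b, a < b ∧ φ a = φ b := by
  by_contra! hne
  exact hK ⟨.ofStrictMono φ fun a b hab => (hφ hab.le).lt_of_ne (hne a b hab)⟩

theorem IsConvexPartition.exists_Ioo_fst_subset {K α β : Type*} [LinearOrder K] [LinearOrder α]
    [LinearOrder β] [Nonempty β] {P : K → Set (α ×ₗ β)} (hP : IsConvexPartition P)
    (hK : ¬ Nonempty (α ↪o K)) :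
    ∃ a b, a < b ∧ ∃ k, {x : α ×ₗ β | (ofLex x).1 ∈ Ioo a b} ⊆ P k := by
  obtain ⟨b₀⟩ := ‹Nonempty β›
  have hmono : Monotone fun a : α => hP.index (toLex (a, b₀)) :=
    hP.monotone_index.comp fun a a' h => Prod.Lex.toLex_mono ⟨h, le_rfl⟩
  obtain ⟨a, b, hab, heq⟩ := hmono.exists_lt_apply_eq hK
  refine ⟨a, b, hab, _, fun x hx => (hP.ordConnected_s9 _).out (hP.mem_index (toLex (a, b₀)))
    (heq ▸ hP.mem_index (toLex (b, b₀))) ⟨?_, ?_⟩⟩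
  · exact (Prod.Lex.lt_iff.2 (Or.inl hx.1)).le
  · exact (Prod.Lex.lt_iff.2 (Or.inl hx.2)).le

def OrderEmbedding.prodLexMap {α β γ : Type*} [PartialOrder α] [PartialOrder β] [Preorder γ]
    (g : α ↪o γ) : α ×ₗ β ↪o γ ×ₗ β :=
  .ofMapLEIff (fun x : α ×ₗ β => toLex (g (ofLex x).1, (ofLex x).2)) fun x y => by
    rw [Prod.Lex.toLex_le_toLex, Prod.Lex.le_iff, g.lt_iff_lt, g.injective.eq_iff]

theorem OrderEmbedding.range_prodLexMap {α β γ : Type*} [PartialOrder α] [PartialOrder β]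
    [Preorder γ] (g : α ↪o γ) : range (g.prodLexMap (β := β)) = {x | (ofLex x).1 ∈ range g} := by
  ext x
  constructor
  · rintro ⟨y, rfl⟩
    exact ⟨(ofLex y).1, rfl⟩
  · rintro ⟨a, ha⟩
    exact ⟨toLex (a, (ofLex x).2), by simp [prodLexMap, ha]⟩

theorem Set.OrdConnected.image_orderEmbedding_of_subset_s9 {α β : Type*} [Preorder α] [Preorder β]
    {f : α ↪o β} {s t : Set α} (hs : s.OrdConnected) (hst : s ⊆ t) (ht : (f '' t).OrdConnected) :
    (f '' s).OrdConnected := by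
  refine ⟨?_⟩
  rintro _ ⟨x, hx, rfl⟩ _ ⟨y, hy, rfl⟩ z hz
  obtain ⟨w, -, rfl⟩ := ht.out ⟨x, hst hx, rfl⟩ ⟨y, hst hy, rfl⟩ hz
  exact ⟨w, hs.out hx hy ⟨f.le_iff_le.1 hz.1, f.le_iff_le.1 hz.2⟩, rfl⟩

theorem LCE.exists_ordConnected_range_of_rat_prodLex {ℒ : Set LinOrd.{u}}
    (hℒ : ∀ A ∈ ℒ, ¬ Nonempty (ℚ ↪o ↥A)) {L : Type v} {L' : Type w} [LinearOrder L]
    [LinearOrder L'] [Nonempty L] (h : LCE ℒ (ℚ ×ₗ L) L') :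
    ∃ f : (ℚ ×ₗ L) ↪o L', (range f).OrdConnected := by
  obtain ⟨K, hK, P, hP, f, hf⟩ := h
  obtain ⟨a, b, hab, k, hband⟩ := hP.exists_Ioo_fst_subset (hℒ K hK)
  have := nonempty_Ioo_subtype hab
  obtain ⟨e⟩ := Order.iso_of_countable_dense ℚ (Ioo a b)
  let g : ℚ ↪o ℚ := e.toOrderEmbedding.trans (OrderEmbedding.subtype _)
  have hg : range g = Ioo a b := by ext; simp [g]
  refine ⟨g.prodLexMap.trans f, ?_⟩
  rw [RelEmbedding.coe_trans, range_comp, g.range_prodLexMap, hg]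
  exact (ordConnected_Ioo.preimage_mono Prod.Lex.monotone_fst_ofLex).image_orderEmbedding_of_subset_s9
    hband (hf k)

theorem isConvexPartition_const_univ (K : Type*) {α : Type*} [LinearOrder K] [LinearOrder α]
    [Unique K] [Nonempty α] : IsConvexPartition fun _ : K => (univ : Set α) := by
  obtain ⟨x⟩ := ‹Nonempty α›
  refine ⟨fun _ => univ_nonempty, fun _ => ⟨default, trivial, fun _ _ => Subsingleton.elim _ _⟩,
    fun k k' => ?_⟩
  simpa [Subsingleton.elim k k'] using ⟨x, x, le_rfl⟩

theorem LCE.of_ordConnected_range {ℒ : Set LinOrd.{u}} {K : LinOrd.{u}} (hK : K ∈ ℒ) [Unique K]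
    {L : Type v} {L' : Type w} [LinearOrder L] [LinearOrder L'] [Nonempty L] (f : L ↪o L')
    (hf : (range f).OrdConnected) : LCE ℒ L L' :=
  ⟨K, hK, _, isConvexPartition_const_univ K, f, fun _ => image_univ (f := f) ▸ hf⟩

/-- For a class `ℒ` of scattered linear orders downward closed under embeddability:
`L·ℚ ⊴^ℒ L'` iff `L·ℚ` convexly embeds into `L'`. -/
theorem stmt_9 (ℒ : Set LinOrd.{u}) (hne : ℒ.Nonempty)
    (hmem : ∀ A ∈ ℒ, Nonempty ↥A ∧ ¬ Nonempty (ℚ ↪o ↥A))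
    (hdc : ∀ A ∈ ℒ, ∀ B : LinOrd.{u}, Nonempty ↥B → Nonempty (↥B ↪o ↥A) → B ∈ ℒ)
    {L : Type v} {L' : Type w} [LinearOrder L] [LinearOrder L'] [Nonempty L] :
    LCE ℒ (ℚ ×ₗ L) L' ↔ ∃ f : (ℚ ×ₗ L) ↪o L', (Set.range ⇑f).OrdConnected := by
  refine ⟨LCE.exists_ordConnected_range_of_rat_prodLex fun A hA => (hmem A hA).2, ?_⟩
  rintro ⟨f, hf⟩
  obtain ⟨A, hA⟩ := hne
  obtain ⟨a⟩ := (hmem A hA).1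
  have hPUnit : LinOrd.of PUnit.{u + 1} ∈ ℒ :=
    hdc A hA _ ⟨⟨⟩⟩ ⟨.ofStrictMono (fun _ => a) (Subsingleton.strictMono _)⟩
  have : Unique (LinOrd.of PUnit.{u + 1}) := inferInstanceAs (Unique PUnit)
  exact LCE.of_ordConnected_range hPUnit f hf
end

section
/- For countable linear orders L and L', if ℤ·L is isomorphic to ℤ·L' then L is isomorphic to L'. -/
/-!
Two points of `L ×ₗ ℤ` lie in the same copy of `ℤ` exactly when the interval between them is
finite. An order isomorphism preserves finiteness of intervals, so it maps copies onto copies, and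
the map it induces on the indices of the copies is an order isomorphism `L ≃o L'`.
-/

open Set

section

variable {α β γ δ : Type*} [LinearOrder α] [LinearOrder β] [LinearOrder γ] [LinearOrder δ]

namespace Prod.Lex

theorem Icc_finite_of_fst_eq [LocallyFiniteOrder β] {a b : α ×ₗ β}
    (h : (ofLex a).1 = (ofLex b).1) : (Icc a b).Finite := by
  refine ((finite_Icc (ofLex a).2 (ofLex b).2).image fun n ↦ toLex ((ofLex a).1, n)).subset ?_
  rintro c ⟨hac, hcb⟩
  have hc : (ofLex a).1 = (ofLex c).1 :=
    le_antisymm (monotone_fst a c hac) (h ▸ monotone_fst c b hcb)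
  exact ⟨(ofLex c).2, ⟨(le_iff'.1 hac).2 hc, (le_iff'.1 hcb).2 (hc.symm.trans h)⟩, by rw [hc]; rfl⟩

theorem Icc_infinite_of_fst_lt_s11 [NoMaxOrder β] {a b : α ×ₗ β}
    (h : (ofLex a).1 < (ofLex b).1) : (Icc a b).Infinite := by
  have hinj : Function.Injective fun n : β ↦ toLex ((ofLex a).1, n) := fun m n hmn ↦
    congrArg Prod.snd (toLex.injective hmn)
  refine ((Ici_infinite (ofLex a).2).image hinj.injOn).mono ?_
  rintro _ ⟨n, hn, rfl⟩
  exact ⟨le_iff'.2 ⟨le_rfl, fun _ ↦ hn⟩, le_iff.2 (Or.inl h)⟩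

theorem fst_eq_iff_uIcc_finite [LocallyFiniteOrder β] [NoMaxOrder β] {a b : α ×ₗ β} :
    (ofLex a).1 = (ofLex b).1 ↔ (uIcc a b).Finite := by
  wlog hab : a ≤ b generalizing a b
  · rw [eq_comm, uIcc_comm]
    exact this (le_of_not_ge hab)
  rw [uIcc_of_le hab]
  refine ⟨Icc_finite_of_fst_eq, fun hfin ↦ ?_⟩
  by_contra hne
  exact Icc_infinite_of_fst_lt_s11 ((monotone_fst a b hab).lt_of_ne hne) hfin

end Prod.Lex

namespace OrderIso

variable [LocallyFiniteOrder β] [NoMaxOrder β] [LocallyFiniteOrder δ] [NoMaxOrder δ]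

theorem fst_ofLex_eq_iff (f : α ×ₗ β ≃o γ ×ₗ δ) {a b : α ×ₗ β} :
    (ofLex (f a)).1 = (ofLex (f b)).1 ↔ (ofLex a).1 = (ofLex b).1 := by
  have himage : f '' uIcc a b = uIcc (f a) (f b) := by simp [uIcc, f.image_Icc]
  rw [Prod.Lex.fst_eq_iff_uIcc_finite, Prod.Lex.fst_eq_iff_uIcc_finite, ← himage,
    finite_image_iff f.injective.injOn]

theorem strictMono_fst_ofLex_apply_toLex (f : α ×ₗ β ≃o γ ×ₗ δ) (b : β) :
    StrictMono fun x : α ↦ (ofLex (f (toLex (x, b)))).1 := fun _ _ hxy ↦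
  (Prod.Lex.monotone_fst _ _ (f.strictMono (Prod.Lex.toLex_lt_toLex.2 (Or.inl hxy))).le).lt_of_ne
    (f.fst_ofLex_eq_iff.not.2 hxy.ne)

theorem surjective_fst_ofLex_apply_toLex [Nonempty δ] (f : α ×ₗ β ≃o γ ×ₗ δ) (b : β) :
    Function.Surjective fun x : α ↦ (ofLex (f (toLex (x, b)))).1 := by
  intro c
  let a := f.symm (toLex (c, Classical.arbitrary δ))
  refine ⟨(ofLex a).1, ?_⟩
  simpa [a] using (f.fst_ofLex_eq_iff (a := toLex ((ofLex a).1, b)) (b := a)).2 rfl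

noncomputable def fstOfProdLex [Nonempty β] [Nonempty δ] (f : α ×ₗ β ≃o γ ×ₗ δ) : α ≃o γ :=
  StrictMono.orderIsoOfSurjective _ (f.strictMono_fst_ofLex_apply_toLex (Classical.arbitrary β))
    (f.surjective_fst_ofLex_apply_toLex _)

end OrderIso

end

theorem stmt_11_general {L L' : Type*} [LinearOrder L] [LinearOrder L']
    (h : Nonempty ((L ×ₗ ℤ) ≃o (L' ×ₗ ℤ))) : Nonempty (L ≃o L') :=
  h.map OrderIso.fstOfProdLex

/-- For countable linear orders `L` and `L'`, if `ℤ·L ≅ ℤ·L'` then `L ≅ L'`. -/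
theorem stmt_11 {L L' : Type*} [LinearOrder L] [LinearOrder L']
    [Countable L] [Countable L']
    (h : Nonempty ((L ×ₗ ℤ) ≃o (L' ×ₗ ℤ))) : Nonempty (L ≃o L') :=
  stmt_11_general h
end

section
/- Let D be a dense linear order without endpoints, let f : D → Lin be an assignment of nonempty linear orders, let K be a scattered linear order, and let (L_k)_{k∈K} be a K-convex partition of the sum D^f = Σ_{d∈D} f(d). Then there exist k ∈ K and d₀ < d₁ in D such that the subsum Σ_{d ∈ (d₀,d₁)} f(d) is contained in L_k. -/
universe u v w x

/-- If `D` is a dense order without endpoints, `K` is scattered, and `(P k)` is a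
`K`-convex partition of `Σ_{d ∈ D} F d`, then some piece contains a full open subsum. -/
theorem stmt_12 {D : Type u} [LinearOrder D] [Nonempty D] [DenselyOrdered D]
    [NoMinOrder D] [NoMaxOrder D]
    (F : D → Type v) [∀ d, LinearOrder (F d)] (hF : ∀ d, Nonempty (F d))
    {K : Type w} [LinearOrder K] (hK : ¬ Nonempty (ℚ ↪o K))
    (P : K → Set (Lex ((d : D) × F d))) (hP : IsConvexPartition P) :
    ∃ (k : K) (d₀ d₁ : D), d₀ < d₁ ∧
      ∀ p : Lex ((d : D) × F d), d₀ < (ofLex p).1 → (ofLex p).1 < d₁ → p ∈ P k := by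
  obtain ⟨hne, huniq, hlt⟩ := hP
  by_contra hcon
  push_neg at hcon
  -- choose an element of each fiber
  have x : ∀ d, F d := fun d => Classical.choice (hF d)
  -- the index map
  have hπ : ∀ p : Lex ((d : D) × F d), ∃ k, p ∈ P k := fun p => (huniq p).exists
  classical
  set π : Lex ((d : D) × F d) → K := fun p => Classical.choose (hπ p) with hπdef
  have hmem : ∀ p, p ∈ P (π p) := fun p => Classical.choose_spec (hπ p)
  have hmem_eq : ∀ p k, p ∈ P k → π p = k := fun p k hk =>
    ((huniq p).unique (hmem p) hk)
  -- π is monotone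
  have hmono : ∀ p q : Lex ((d : D) × F d), p < q → π p ≤ π q := by
    intro p q hpq
    by_contra h
    push_neg at h
    exact absurd ((hlt _ _).1 h _ (hmem q) _ (hmem p)) (asymm hpq)
  -- pieces are convex
  have hconv : ∀ k (a b c : Lex ((d : D) × F d)), a ∈ P k → b ∈ P k → a ≤ c → c ≤ b →
      c ∈ P k := by
    intro k a b c ha hb hac hcb
    have hc := hmem c
    rcases lt_trichotomy (π c) k with h | h | h
    · have := (hlt _ _).1 h _ hc _ ha
      exact absurd hac this.not_ge
    · rwa [← h]
    · have := (hlt _ _).1 h _ hb _ hc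
      exact absurd hcb this.not_ge
  set φ : D → K := fun d => π (toLex ⟨d, x d⟩) with hφdef
  have hφmono : ∀ a b : D, a < b → φ a ≤ φ b := by
    intro a b hab
    exact hmono _ _ (Sigma.Lex.lt_def.2 (Or.inl hab))
  -- splitting property : φ is non-constant on every open interval
  have hsplit : ∀ a b : D, a < b → ∃ u v : D, a < u ∧ u < v ∧ v < b ∧ φ u < φ v := by
    intro a b hab
    by_contra h
    push_neg at h
    have hconst : ∀ u v : D, a < u → u < v → v < b → φ u = φ v := by
      intro u v hu huv hv
      exact le_antisymm (hφmono _ _ huv) (h u v hu huv hv).ge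
    obtain ⟨d, hd1, hd2⟩ := exists_between hab
    obtain ⟨p, hp1, hp2, hp3⟩ := hcon (φ d) a b hab
    obtain ⟨d', hd'1, hd'2⟩ := exists_between hp1
    obtain ⟨d'', hd''1, hd''2⟩ := exists_between hp2
    apply hp3
    have h1 : φ d' = φ d := by
      rcases lt_trichotomy d' d with hh | hh | hh
      · exact hconst d' d hd'1 hh hd2
      · rw [hh]
      · exact (hconst d d' hd1 hh (hd'2.trans hp2)).symm
    have h2 : φ d'' = φ d := by
      rcases lt_trichotomy d'' d with hh | hh | hh
      · exact hconst d'' d (hp1.trans hd''1) hh hd2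
      · rw [hh]
      · exact (hconst d d'' hd1 hh hd''2).symm
    have ha' : toLex ⟨d', x d'⟩ ∈ P (φ d) := h1 ▸ hmem (toLex ⟨d', x d'⟩)
    have hb' : toLex ⟨d'', x d''⟩ ∈ P (φ d) := h2 ▸ hmem (toLex ⟨d'', x d''⟩)
    refine hconv _ _ _ _ ha' hb' ?_ ?_
    · exact (Sigma.Lex.lt_def.2 (Or.inl hd'2)).le
    · exact (Sigma.Lex.lt_def.2 (Or.inl hd''1)).le
  -- strict betweenness : between two distinct φ-values there is a third
  have hbetw : ∀ a b : D, a < b → φ a < φ b → ∃ c : D, φ a < φ c ∧ φ c < φ b := by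
    intro a b hab hφab
    obtain ⟨p1, hap1, hp1b⟩ := exists_between hab
    obtain ⟨p2, hp1p2, hp2b⟩ := exists_between hp1b
    obtain ⟨p3, hp2p3, hp3b⟩ := exists_between hp2b
    -- among p1 < p2 < p3 at most one has φ = φ a and one has φ = φ b
    have key : ∀ s t : D, a < s → s < t → t < b → φ s = φ t → False := by
      intro s t hs hst htb hest
      obtain ⟨u, v, hsu, huv, hvt, hφuv⟩ := hsplit s t hst
      have h1 : φ s ≤ φ u := hφmono _ _ hsu
      have h2 : φ v ≤ φ t := hφmono _ _ hvt
      have : φ s < φ t := lt_of_le_of_lt h1 (lt_of_lt_of_le hφuv h2)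
      exact absurd hest this.ne
    have hA : ∀ s : D, a < s → s < b → φ s = φ a → ∀ t : D, s < t → t < b → φ t ≠ φ a := by
      intro s hs hsb hφs t hst htb hφt
      exact key s t hs hst htb (hφs.trans hφt.symm)
    have hB' : ∀ s t : D, a < s → s < t → t < b → φ s = φ b → False := by
      intro s t hs hst htb hφs
      have h1 : φ b ≤ φ t := hφs ▸ hφmono _ _ hst
      have h2 : φ t ≤ φ b := hφmono _ _ htb
      exact key s t hs hst htb (hφs.trans (le_antisymm h1 h2))
    -- now case analysis : one of p1 p2 p3 works
    by_cases h1 : φ p1 = φ a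
    · by_cases h2 : φ p2 = φ a
      · exact absurd (h1.trans h2.symm) fun hh => key p1 p2 hap1 hp1p2 hp2b hh
      · by_cases h2b : φ p2 = φ b
        · exact absurd h2b fun hh => hB' p2 p3 (hap1.trans hp1p2) hp2p3 hp3b hh
        · refine ⟨p2, ?_, ?_⟩
          · exact lt_of_le_of_ne (hφmono _ _ (hap1.trans hp1p2)) (Ne.symm h2)
          · exact lt_of_le_of_ne (hφmono _ _ hp2b) h2b
    · by_cases h1b : φ p1 = φ b
      · exact absurd h1b fun hh => hB' p1 p2 hap1 hp1p2 hp2b hh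
      · refine ⟨p1, ?_, ?_⟩
        · exact lt_of_le_of_ne (hφmono _ _ hap1) (Ne.symm h1)
        · exact lt_of_le_of_ne (hφmono _ _ hp1b) h1b
  -- the range of φ is a nontrivial densely ordered suborder of K
  obtain ⟨a0⟩ := (inferInstance : Nonempty D)
  obtain ⟨b0, hb0⟩ := exists_gt a0
  obtain ⟨u0, v0, _, hu0v0, _, hφ0⟩ := hsplit a0 b0 hb0
  set R : Set K := Set.range φ with hR
  have hRnontriv : Nontrivial R :=
    ⟨⟨φ u0, ⟨u0, rfl⟩⟩, ⟨φ v0, ⟨v0, rfl⟩⟩, fun hh =>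
      hφ0.ne (congrArg Subtype.val hh)⟩
  have hRdense : DenselyOrdered R := by
    constructor
    rintro ⟨_, a, rfl⟩ ⟨_, b, rfl⟩ hab
    have hab' : φ a < φ b := hab
    have haltb : a < b := by
      by_contra hh
      push_neg at hh
      rcases eq_or_lt_of_le hh with hh' | hh'
      · exact hab'.ne' (congrArg φ hh')
      · exact absurd (hφmono _ _ hh') hab'.not_ge
    obtain ⟨c, hc1, hc2⟩ := hbetw a b haltb hab'
    exact ⟨⟨φ c, ⟨c, rfl⟩⟩, hc1, hc2⟩
  obtain ⟨e⟩ := @Order.embedding_from_countable_to_dense ℚ R _ _ _ hRdense hRnontriv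
  exact hK ⟨e.trans (OrderEmbedding.subtype R)⟩
end

section
/- Let D₀, D₁ be dense linear orders without endpoints, and let f₀ : D₀ → Scat, f₁ : D₁ → Scat assign nonempty scattered linear orders. If h is a convex embedding of D₀^{f₀} = Σ_{d∈D₀} f₀(d) into D₁^{f₁} = Σ_{d∈D₁} f₁(d), then there is a convex subset A of D₁ and an order isomorphism g : D₀ → A such that h maps f₀(d) × {d} onto f₁(g(d)) × {g(d)} for every d ∈ D₀; in particular, for every d ∈ D₀ there is d' ∈ D₁ with f₀(d) ≅ f₁(d'). -/
section Stmt13Aux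

open Set

variable {ι : Type*} [LinearOrder ι] {F : ι → Type*} [∀ i, LinearOrder (F i)]

private lemma stmt13_fst_mono {a b : Lex ((i : ι) × F i)} (hab : a ≤ b) :
    (ofLex a).1 ≤ (ofLex b).1 := by
  rcases Sigma.Lex.le_def.1 hab with h | ⟨h, _⟩
  · exact h.le
  · exact h.le

private lemma stmt13_lt_of_fst_lt {a b : Lex ((i : ι) × F i)}
    (hab : (ofLex a).1 < (ofLex b).1) : a < b :=
  Sigma.Lex.lt_def.2 (Or.inl hab)

private lemma stmt13_mk_lt_mk {i : ι} {x y : F i} :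
    toLex (⟨i, x⟩ : (i : ι) × F i) < toLex ⟨i, y⟩ ↔ x < y := by
  constructor
  · intro hxy
    rcases Sigma.Lex.lt_def.1 hxy with h | ⟨h, h2⟩
    · exact absurd h (lt_irrefl i)
    · exact h2
  · intro hxy
    exact Sigma.Lex.lt_def.2 (Or.inr ⟨rfl, hxy⟩)

private lemma stmt13_exists_mk {d : ι} (p : Lex ((i : ι) × F i)) (hp : (ofLex p).1 = d) :
    ∃ x : F d, p = toLex ⟨d, x⟩ := by
  subst hp
  exact ⟨(ofLex p).2, rfl⟩

private lemma stmt13_rat_strictMono_Ioo {D : Type*} [LinearOrder D] [DenselyOrdered D]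
    (F' : D → Type*) [∀ d, LinearOrder (F' d)] (hne : ∀ d, Nonempty (F' d))
    {a b : Lex ((d : D) × F' d)} (hab : (ofLex a).1 < (ofLex b).1) :
    ∃ s : ℚ → Lex ((d : D) × F' d), StrictMono s ∧ ∀ q, a < s q ∧ s q < b := by
  haveI : Nontrivial (Set.Ioo (ofLex a).1 (ofLex b).1) := by
    obtain ⟨c, hc⟩ := exists_between hab
    obtain ⟨c', hc'⟩ := exists_between hc.1
    exact ⟨⟨c, hc⟩, ⟨c', hc'.1, hc'.2.trans hc.2⟩, by
      intro hcc
      exact absurd (congrArg Subtype.val hcc) (ne_of_gt hc'.2)⟩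
  obtain ⟨e⟩ := Order.embedding_from_countable_to_dense ℚ
    (Set.Ioo (ofLex a).1 (ofLex b).1)
  refine ⟨fun q => toLex ⟨(e q : D), (hne _).some⟩, ?_, ?_⟩
  · intro q r hqr
    exact stmt13_lt_of_fst_lt (by exact_mod_cast e.strictMono hqr)
  · intro q
    exact ⟨stmt13_lt_of_fst_lt (e q).2.1, stmt13_lt_of_fst_lt (e q).2.2⟩

private lemma stmt13_no_rat_chain {D : Type*} [LinearOrder D] (F' : D → Type*)
    [∀ d, LinearOrder (F' d)] {d : D} (hsc : ¬ Nonempty (ℚ ↪o F' d))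
    (s : ℚ → Lex ((i : D) × F' i)) (hmono : StrictMono s)
    (hfib : ∀ q, (ofLex (s q)).1 = d) : False := by
  classical
  set f : ℚ → F' d := fun q => Classical.choose (stmt13_exists_mk (s q) (hfib q)) with hf
  have hspec : ∀ q, s q = toLex ⟨d, f q⟩ := fun q =>
    Classical.choose_spec (stmt13_exists_mk (s q) (hfib q))
  refine hsc ⟨OrderEmbedding.ofStrictMono f ?_⟩
  intro q r hqr
  have := hmono hqr
  rw [hspec q, hspec r] at this
  exact stmt13_mk_lt_mk.1 this

end Stmt13Aux

/-- A convex embedding between sums of scattered orders indexed by dense orders without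
endpoints maps fibers onto fibers, along an order isomorphism onto a convex subset. -/
theorem stmt_13 {D₀ D₁ : Type*}
    [LinearOrder D₀] [Nonempty D₀] [DenselyOrdered D₀] [NoMinOrder D₀] [NoMaxOrder D₀]
    [LinearOrder D₁] [Nonempty D₁] [DenselyOrdered D₁] [NoMinOrder D₁] [NoMaxOrder D₁]
    (F₀ : D₀ → Type*) [∀ d, LinearOrder (F₀ d)]
    (hF₀ne : ∀ d, Nonempty (F₀ d)) (hF₀sc : ∀ d, ¬ Nonempty (ℚ ↪o F₀ d))
    (F₁ : D₁ → Type*) [∀ d, LinearOrder (F₁ d)]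
    (hF₁ne : ∀ d, Nonempty (F₁ d)) (hF₁sc : ∀ d, ¬ Nonempty (ℚ ↪o F₁ d))
    (h : Lex ((d : D₀) × F₀ d) ↪o Lex ((d : D₁) × F₁ d))
    (hconv : (Set.range ⇑h).OrdConnected) :
    ∃ A : Set D₁, A.OrdConnected ∧ ∃ g : D₀ ≃o ↥A,
      (∀ d : D₀, ⇑h '' {p : Lex ((d : D₀) × F₀ d) | (ofLex p).1 = d} =
        {p : Lex ((d : D₁) × F₁ d) | (ofLex p).1 = ↑(g d)}) ∧
      ∀ d : D₀, ∃ d' : D₁, Nonempty (F₀ d ≃o F₁ d') := by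
  classical
  -- h maps each fiber into a single fiber
  have main : ∀ a b : Lex ((d : D₀) × F₀ d), (ofLex a).1 = (ofLex b).1 →
      ¬ (ofLex (h a)).1 < (ofLex (h b)).1 := by
    intro a b hab hlt
    obtain ⟨s, smono, hs⟩ := stmt13_rat_strictMono_Ioo F₁ hF₁ne hlt
    have hmem : ∀ q, s q ∈ Set.range ⇑h := fun q =>
      hconv.out ⟨a, rfl⟩ ⟨b, rfl⟩ ⟨(hs q).1.le, (hs q).2.le⟩
    set t : ℚ → Lex ((d : D₀) × F₀ d) := fun q => Classical.choose (hmem q) with ht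
    have hth : ∀ q, h (t q) = s q := fun q => Classical.choose_spec (hmem q)
    have tmono : StrictMono t := fun q r hqr =>
      h.lt_iff_lt.1 (by rw [hth, hth]; exact smono hqr)
    have tfib : ∀ q, (ofLex (t q)).1 = (ofLex a).1 := by
      intro q
      have h1 : a < t q := h.lt_iff_lt.1 (by rw [hth]; exact (hs q).1)
      have h2 : t q < b := h.lt_iff_lt.1 (by rw [hth]; exact (hs q).2)
      exact le_antisymm (hab ▸ stmt13_fst_mono h2.le) (stmt13_fst_mono h1.le)
    exact stmt13_no_rat_chain F₀ (hF₀sc _) t tmono tfib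
  have key1 : ∀ a b : Lex ((d : D₀) × F₀ d), (ofLex a).1 = (ofLex b).1 →
      (ofLex (h a)).1 = (ofLex (h b)).1 := fun a b hab =>
    le_antisymm (not_lt.1 (main b a hab.symm)) (not_lt.1 (main a b hab))
  -- h strictly increases fiber indices
  have key2 : ∀ a b : Lex ((d : D₀) × F₀ d), (ofLex a).1 < (ofLex b).1 →
      (ofLex (h a)).1 < (ofLex (h b)).1 := by
    intro a b hab
    have hle : (ofLex (h a)).1 ≤ (ofLex (h b)).1 :=
      stmt13_fst_mono (h.le_iff_le.2 (stmt13_lt_of_fst_lt hab).le)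
    rcases lt_or_eq_of_le hle with hlt | heq
    · exact hlt
    · exfalso
      obtain ⟨s, smono, hs⟩ := stmt13_rat_strictMono_Ioo F₀ hF₀ne hab
      refine stmt13_no_rat_chain F₁ (hF₁sc (ofLex (h a)).1) (fun q => h (s q))
        (fun q r hqr => h.lt_iff_lt.2 (smono hqr)) ?_
      intro q
      have h1 : (ofLex (h a)).1 ≤ (ofLex (h (s q))).1 :=
        stmt13_fst_mono (h.le_iff_le.2 (hs q).1.le)
      have h2 : (ofLex (h (s q))).1 ≤ (ofLex (h b)).1 :=
        stmt13_fst_mono (h.le_iff_le.2 (hs q).2.le)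
      exact le_antisymm (heq ▸ h2) h1
  -- the induced map on indices
  set g₀ : D₀ → D₁ := fun d => (ofLex (h (toLex ⟨d, (hF₀ne d).some⟩))).1 with hg₀
  have hφ : ∀ p : Lex ((d : D₀) × F₀ d), (ofLex (h p)).1 = g₀ (ofLex p).1 := fun p =>
    key1 p (toLex ⟨(ofLex p).1, (hF₀ne _).some⟩) rfl
  have g₀mono : StrictMono g₀ := fun d d' hdd' =>
    key2 (toLex ⟨d, (hF₀ne d).some⟩) (toLex ⟨d', (hF₀ne d').some⟩) hdd'
  -- every point whose index is bounded by the range of g₀ is in the range of h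
  have claim : ∀ q : Lex ((d : D₁) × F₁ d), (∃ dl, g₀ dl ≤ (ofLex q).1) →
      (∃ du, (ofLex q).1 ≤ g₀ du) →
      ∃ p : Lex ((d : D₀) × F₀ d), h p = q ∧ g₀ (ofLex p).1 = (ofLex q).1 := by
    rintro q ⟨dl, hdl⟩ ⟨du, hdu⟩
    obtain ⟨dl', hdl'⟩ := exists_lt dl
    obtain ⟨du', hdu'⟩ := exists_gt du
    have h1 : h (toLex ⟨dl', (hF₀ne dl').some⟩) < q :=
      stmt13_lt_of_fst_lt (lt_of_lt_of_le (g₀mono hdl') hdl)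
    have h2 : q < h (toLex ⟨du', (hF₀ne du').some⟩) :=
      stmt13_lt_of_fst_lt (lt_of_le_of_lt hdu (g₀mono hdu'))
    obtain ⟨p, hp⟩ := hconv.out ⟨_, rfl⟩ ⟨_, rfl⟩ ⟨h1.le, h2.le⟩
    exact ⟨p, hp, by rw [← hφ, hp]⟩
  refine ⟨Set.range g₀, ?_, g₀mono.orderIso g₀, ?_, ?_⟩
  · -- range g₀ is OrdConnected
    constructor
    rintro _ ⟨d, rfl⟩ _ ⟨d', rfl⟩ z hz
    obtain ⟨p, _, hp2⟩ := claim (toLex ⟨z, (hF₁ne z).some⟩) ⟨d, hz.1⟩ ⟨d', hz.2⟩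
    exact ⟨(ofLex p).1, hp2⟩
  · -- fibers map onto fibers
    intro d
    ext q
    constructor
    · rintro ⟨p, hp, rfl⟩
      show (ofLex (h p)).1 = g₀ d
      rw [hφ, hp]
    · intro hq
      have hq' : (ofLex q).1 = g₀ d := hq
      obtain ⟨p, hp1, hp2⟩ := claim q ⟨d, hq'.ge⟩ ⟨d, hq'.le⟩
      refine ⟨p, ?_, hp1⟩
      show (ofLex p).1 = d
      exact g₀mono.injective (by rw [hp2, hq'])
  · -- fibers are order isomorphic
    intro d
    refine ⟨g₀ d, ?_⟩
    set e : F₀ d → F₁ (g₀ d) := fun x =>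
      Classical.choose (stmt13_exists_mk (h (toLex ⟨d, x⟩)) (hφ (toLex ⟨d, x⟩))) with he
    have hspec : ∀ x, h (toLex ⟨d, x⟩) = toLex ⟨g₀ d, e x⟩ := fun x =>
      Classical.choose_spec (stmt13_exists_mk (h (toLex ⟨d, x⟩)) (hφ (toLex ⟨d, x⟩)))
    have emono : StrictMono e := by
      intro x y hxy
      have := h.lt_iff_lt.2 (stmt13_mk_lt_mk.2 hxy : toLex ⟨d, x⟩ < toLex ⟨d, y⟩)
      rw [hspec x, hspec y] at this
      exact stmt13_mk_lt_mk.1 this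
    have esurj : Function.Surjective e := by
      intro w
      obtain ⟨p, hp1, hp2⟩ := claim (toLex ⟨g₀ d, w⟩) ⟨d, le_refl _⟩ ⟨d, le_refl _⟩
      have hpd : (ofLex p).1 = d := g₀mono.injective hp2
      obtain ⟨x, rfl⟩ := stmt13_exists_mk p hpd
      refine ⟨x, ?_⟩
      have := (hspec x).symm.trans hp1
      have h2 := toLex.injective this
      exact eq_of_heq (Sigma.mk.inj_iff.1 h2).2
    exact ⟨StrictMono.orderIsoOfSurjective e emono esurj⟩
end

section
/- Let f₀, f₁ : ℚ → Scat assign nonempty countable scattered linear orders such that for each i and each L in the range of f_i, the preimage f_i⁻¹({orders isomorphic to L}) is dense in ℚ. Then η^{f₀} ≅ η^{f₁} if and only if f₀(ℚ) and f₁(ℚ) contain the same linear orders up to isomorphism. -/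
/-!
An order isomorphism `e : η^{f₀} ≃o η^{f₁}` maps each block `f₀(q)` into a single block of
`η^{f₁}`: if two points of `f₀(q)` landed in blocks `q₁ < q₂`, the points of `η^{f₁}` over
`(q₁, q₂)` would contain a copy of `ℚ`, whose preimage would be a copy of `ℚ` inside the scattered
order `f₀(q)`. Applied to `e` and `e⁻¹`, this makes `e` restrict to isomorphisms between blocks.

Conversely, if both families realise the same isomorphism types, each type is realised densely
in both families, and a back-and-forth construction on `ℚ` that only matches points carrying
isomorphic orders gives `g : ℚ ≃o ℚ` with `f₀(q) ≅ f₁(g q)`; these isomorphisms glue to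
`η^{f₀} ≅ η^{f₁}`.
-/

noncomputable section

namespace Order

variable {α β : Type*} [LinearOrder α] [LinearOrder β]

theorem exists_between_finsets_of_dense [NoMinOrder β] [NoMaxOrder β] [Nonempty β]
    {p : β → Prop} (hp : ∀ x y : β, x < y → ∃ b, x < b ∧ b < y ∧ p b)
    (lo hi : Finset β) (lo_lt_hi : ∀ x ∈ lo, ∀ y ∈ hi, x < y) :
    ∃ m, p m ∧ (∀ x ∈ lo, x < m) ∧ ∀ y ∈ hi, m < y := by
  have : DenselyOrdered β :=
    ⟨fun x y h => let ⟨b, hxb, hby, _⟩ := hp x y h; ⟨b, hxb, hby⟩⟩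
  obtain ⟨x, hlo, hhi⟩ := exists_between_finsets lo hi lo_lt_hi
  obtain ⟨y, hxy, hyhi⟩ := exists_between_finsets {x} hi (by simpa using hhi)
  obtain ⟨m, hxm, hmy, hm⟩ := hp x y (hxy x (Finset.mem_singleton_self x))
  exact ⟨m, hm, fun z hz => (hlo z hz).trans hxm, fun z hz => hmy.trans (hyhi z hz)⟩

namespace PartialIso

theorem exists_across_of_dense [NoMinOrder β] [NoMaxOrder β] [Nonempty β]
    {p : β → Prop} (hp : ∀ x y : β, x < y → ∃ b, x < b ∧ b < y ∧ p b)
    (f : PartialIso α β) {a : α} (ha : ∀ b, (a, b) ∉ f.val) :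
    ∃ b, p b ∧ ∀ q ∈ f.val, cmp q.1 a = cmp q.2 b := by
  have lo_lt_hi : ∀ x ∈ {q ∈ f.val | q.1 < a}.image Prod.snd,
      ∀ y ∈ {q ∈ f.val | a < q.1}.image Prod.snd, x < y := by
    simp only [Finset.mem_image, Finset.mem_filter]
    rintro _ ⟨q, ⟨hq, hqa⟩, rfl⟩ _ ⟨r, ⟨hr, har⟩, rfl⟩
    exact (lt_iff_lt_of_cmp_eq_cmp (f.prop q hq r hr)).mp (hqa.trans har)
  obtain ⟨b, hb, hlo, hhi⟩ := exists_between_finsets_of_dense hp _ _ lo_lt_hi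
  refine ⟨b, hb, fun q hq => ?_⟩
  rcases lt_or_gt_of_ne (fun h : q.1 = a => ha q.2 (h ▸ hq)) with hqa | haq
  · have hqb := hlo _ (Finset.mem_image_of_mem _ (Finset.mem_filter.mpr ⟨hq, hqa⟩))
    rw [(cmp_eq_lt_iff _ _).mpr hqa, (cmp_eq_lt_iff _ _).mpr hqb]
  · have hbq := hhi _ (Finset.mem_image_of_mem _ (Finset.mem_filter.mpr ⟨hq, haq⟩))
    rw [(cmp_eq_gt_iff _ _).mpr haq, (cmp_eq_gt_iff _ _).mpr hbq]

theorem mem_comm {f : PartialIso α β} {q : β × α} : q ∈ f.comm.val ↔ q.swap ∈ f.val := by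
  obtain ⟨b, a⟩ := q
  simp [PartialIso.comm, Subtype.map]

end PartialIso

variable (R : α → β → Prop)

def ColoredPartialIso : Type _ :=
  { f : PartialIso α β // ∀ q ∈ f.val, R q.1 q.2 }

namespace ColoredPartialIso

instance : Preorder (ColoredPartialIso R) := Subtype.preorder _

instance : Inhabited (ColoredPartialIso R) :=
  ⟨⟨default, fun _ h => (Finset.notMem_empty _ h).elim⟩⟩

variable {R}

theorem exists_le_mem (f : ColoredPartialIso R) {a : α} {b : β} (hab : R a b)
    (hcmp : ∀ q ∈ f.val.val, cmp q.1 a = cmp q.2 b) :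
    ∃ g : ColoredPartialIso R, f ≤ g ∧ (a, b) ∈ g.val.val := by
  refine ⟨⟨⟨insert (a, b) f.val.val, ?_⟩, ?_⟩, Finset.subset_insert _ _,
    Finset.mem_insert_self _ _⟩
  · simp only [Finset.mem_insert]
    rintro q (rfl | hq) r (rfl | hr)
    · exact (cmp_self_eq_eq _).trans (cmp_self_eq_eq _).symm
    · rw [cmp_eq_cmp_symm]; exact hcmp r hr
    · exact hcmp q hq
    · exact f.val.prop q hq r hr
  · simp only [Finset.mem_insert]
    rintro q (rfl | hq)
    exacts [hab, f.prop q hq]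

def definedAtLeft [NoMinOrder β] [NoMaxOrder β] [Nonempty β]
    (hR : ∀ a x y, x < y → ∃ b, x < b ∧ b < y ∧ R a b) (a : α) :
    Cofinal (ColoredPartialIso R) where
  carrier := {f | ∃ b, (a, b) ∈ f.val.val}
  isCofinal f := by
    by_cases hdom : ∃ b, (a, b) ∈ f.val.val
    · exact ⟨f, hdom, le_rfl⟩
    push Not at hdom
    obtain ⟨b, hab, hcmp⟩ := f.val.exists_across_of_dense (hR a) hdom
    obtain ⟨g, hfg, hg⟩ := f.exists_le_mem hab hcmp
    exact ⟨g, ⟨b, hg⟩, hfg⟩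

def definedAtRight [NoMinOrder α] [NoMaxOrder α] [Nonempty α]
    (hR : ∀ b x y, x < y → ∃ a, x < a ∧ a < y ∧ R a b) (b : β) :
    Cofinal (ColoredPartialIso R) where
  carrier := {f | ∃ a, (a, b) ∈ f.val.val}
  isCofinal f := by
    by_cases hran : ∃ a, (a, b) ∈ f.val.val
    · exact ⟨f, hran, le_rfl⟩
    push Not at hran
    obtain ⟨a, hab, hcmp⟩ := f.val.comm.exists_across_of_dense (hR b)
      (fun a h => hran a (PartialIso.mem_comm.mp h))
    obtain ⟨g, hfg, hg⟩ := f.exists_le_mem hab fun q hq =>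
      (hcmp q.swap (PartialIso.mem_comm.mpr hq)).symm
    exact ⟨g, ⟨a, hg⟩, hfg⟩

end ColoredPartialIso

variable {R}

open ColoredPartialIso in
theorem exists_orderIso_forall_rel [Countable α] [NoMinOrder α] [NoMaxOrder α] [Nonempty α]
    [Countable β] [NoMinOrder β] [NoMaxOrder β] [Nonempty β]
    (hR₁ : ∀ a x y, x < y → ∃ b, x < b ∧ b < y ∧ R a b)
    (hR₂ : ∀ b x y, x < y → ∃ a, x < a ∧ a < y ∧ R a b) :
    ∃ g : α ≃o β, ∀ a, R a (g a) := by
  cases nonempty_encodable α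
  cases nonempty_encodable β
  let cofinals : α ⊕ β → Cofinal (ColoredPartialIso R) :=
    Sum.elim (definedAtLeft hR₁) (definedAtRight hR₂)
  let I := idealOfCofinals default cofinals
  have hF (a : α) : ∃ b, ∃ f ∈ I, (a, b) ∈ f.val.val := by
    obtain ⟨f, ⟨b, hb⟩, hf⟩ := cofinal_meets_idealOfCofinals default cofinals (.inl a)
    exact ⟨b, f, hf, hb⟩
  have hG (b : β) : ∃ a, ∃ f ∈ I, (a, b) ∈ f.val.val := by
    obtain ⟨f, ⟨a, ha⟩, hf⟩ := cofinal_meets_idealOfCofinals default cofinals (.inr b)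
    exact ⟨a, f, hf, ha⟩
  choose F hF using hF
  choose G hG using hG
  refine ⟨OrderIso.ofCmpEqCmp F G fun a b => ?_, fun a => ?_⟩
  · obtain ⟨f, hf, ha⟩ := hF a
    obtain ⟨g, hg, hb⟩ := hG b
    obtain ⟨m, -, hfm, hgm⟩ := I.directed f hf g hg
    exact m.val.prop _ (hfm ha) _ (hgm hb)
  · obtain ⟨f, -, ha⟩ := hF a
    exact f.prop _ ha

end Order

def OrderIso.subtypeEquiv {α β : Type*} [Preorder α] [Preorder β] (e : α ≃o β)
    {p : α → Prop} {q : β → Prop} (h : ∀ a, p a ↔ q (e a)) : {a // p a} ≃o {b // q b} where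
  toEquiv := e.toEquiv.subtypeEquiv h
  map_rel_iff' := e.le_iff_le

namespace Sigma.Lex

variable {ι κ : Type*} [LinearOrder ι] [LinearOrder κ]

section Fiber

variable {G : ι → Type*} [∀ i, LinearOrder (G i)]

theorem monotone_fst : Monotone fun s : Σₗ i, G i => (ofLex s).1 := by
  intro s t h
  rcases le_def.mp h with h | ⟨h, -⟩
  exacts [h.le, h.le]

theorem fst_eq_of_le_of_le {s u t : Σₗ i, G i} (hsu : s ≤ u) (hut : u ≤ t)
    (hst : (ofLex s).1 = (ofLex t).1) : (ofLex u).1 = (ofLex s).1 :=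
  le_antisymm (hst ▸ monotone_fst hut) (monotone_fst hsu)

def fiberOrderIso (i : ι) : {s : Σₗ i, G i // (ofLex s).1 = i} ≃o G i where
  toEquiv := (ofLex.subtypeEquiv fun _ => Iff.rfl).trans (Equiv.sigmaSubtype i)
  map_rel_iff' := by
    rintro ⟨⟨j, x⟩, hj : j = i⟩ ⟨⟨k, y⟩, hk : k = i⟩
    subst hj hk
    change x ≤ y ↔ toLex (⟨k, x⟩ : Sigma G) ≤ toLex ⟨k, y⟩
    rw [le_def]
    refine ⟨fun h => .inr ⟨rfl, h⟩, ?_⟩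
    rintro (h | ⟨_, h⟩)
    exacts [(lt_irrefl k h).elim, h]

theorem exists_orderEmbedding_between [DenselyOrdered ι] (hG : ∀ i, Nonempty (G i))
    {s t : Σₗ i, G i} (h : (ofLex s).1 < (ofLex t).1) :
    ∃ φ : ℚ ↪o Σₗ i, G i, ∀ r, s < φ r ∧ φ r < t := by
  obtain ⟨a, hsa, hat⟩ := exists_between h
  obtain ⟨b, hab, hbt⟩ := exists_between hat
  have : Nontrivial (Set.Ioo (ofLex s).1 (ofLex t).1) :=
    ⟨⟨⟨a, hsa, hat⟩, ⟨b, hsa.trans hab, hbt⟩, fun h => hab.ne (congrArg Subtype.val h)⟩⟩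
  obtain ⟨ψ⟩ :=
    Order.embedding_from_countable_to_dense (α := ℚ) (β := Set.Ioo (ofLex s).1 (ofLex t).1)
  let pt (i : ι) : G i := (hG i).some
  refine ⟨OrderEmbedding.ofStrictMono (fun r => toLex ⟨ψ r, pt _⟩) fun r r' hr => ?_,
    fun r => ⟨?_, ?_⟩⟩
  · exact Sigma.Lex.left _ _ (ψ.strictMono hr)
  · exact Sigma.Lex.left _ _ (ψ r).2.1
  · exact Sigma.Lex.left _ _ (ψ r).2.2

end Fiber

variable {G₀ : ι → Type*} {G₁ : κ → Type*} [∀ i, LinearOrder (G₀ i)] [∀ j, LinearOrder (G₁ j)]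

theorem fst_apply_eq_of_fst_eq [DenselyOrdered κ] (hG₁ : ∀ j, Nonempty (G₁ j))
    (hG₀ : ∀ i, ¬ Nonempty (ℚ ↪o G₀ i)) (e : (Σₗ i, G₀ i) ≃o Σₗ j, G₁ j) {s t : Σₗ i, G₀ i}
    (h : (ofLex s).1 = (ofLex t).1) : (ofLex (e s)).1 = (ofLex (e t)).1 := by
  wlog hst : s ≤ t generalizing s t
  · exact (this h.symm (le_of_not_ge hst)).symm
  by_contra hne
  obtain ⟨φ, hφ⟩ :=
    exists_orderEmbedding_between hG₁ ((monotone_fst (e.monotone hst)).lt_of_ne hne)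
  have hfiber (r : ℚ) : (ofLex (e.symm (φ r))).1 = (ofLex s).1 :=
    fst_eq_of_le_of_le (e.le_symm_apply.mpr (hφ r).1.le) (e.symm_apply_le.mpr (hφ r).2.le) h
  refine hG₀ _ ⟨OrderEmbedding.ofStrictMono
    (fun r => fiberOrderIso _ ⟨e.symm (φ r), hfiber r⟩) fun r r' hr => ?_⟩
  exact (fiberOrderIso (G := G₀) _).lt_iff_lt.mpr (e.symm.strictMono (φ.strictMono hr))

theorem exists_orderIso_fiber [DenselyOrdered ι] [DenselyOrdered κ]
    (hG₀ : ∀ i, Nonempty (G₀ i)) (hG₁ : ∀ j, Nonempty (G₁ j))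
    (hG₀sc : ∀ i, ¬ Nonempty (ℚ ↪o G₀ i)) (hG₁sc : ∀ j, ¬ Nonempty (ℚ ↪o G₁ j))
    (e : (Σₗ i, G₀ i) ≃o Σₗ j, G₁ j) (i : ι) : ∃ j, Nonempty (G₀ i ≃o G₁ j) := by
  obtain ⟨x⟩ := hG₀ i
  have hfiber (s : Σₗ i, G₀ i) :
      (ofLex s).1 = i ↔ (ofLex (e s)).1 = (ofLex (e (toLex ⟨i, x⟩))).1 := by
    refine ⟨fun h => fst_apply_eq_of_fst_eq hG₁ hG₀sc e h, fun h => ?_⟩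
    simpa using fst_apply_eq_of_fst_eq hG₀ hG₁sc e.symm h
  exact ⟨_, ⟨(fiberOrderIso i).symm.trans ((e.subtypeEquiv hfiber).trans (fiberOrderIso _))⟩⟩

def _root_.OrderIso.sigmaLexCongr (g : ι ≃o κ) (φ : ∀ i, G₀ i ≃o G₁ (g i)) :
    (Σₗ i, G₀ i) ≃o Σₗ j, G₁ j :=
  StrictMono.orderIsoOfSurjective
    (fun s => toLex (Equiv.sigmaCongr g.toEquiv (fun i => (φ i).toEquiv) (ofLex s)))
    (by
      rintro ⟨i, x⟩ ⟨j, y⟩ (⟨_, _, h⟩ | ⟨_, _, h⟩)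
      exacts [Sigma.Lex.left _ _ (g.strictMono h), Sigma.Lex.right _ _ ((φ i).strictMono h)])
    (toLex.surjective.comp ((Equiv.sigmaCongr _ _).surjective.comp ofLex.surjective))

end Sigma.Lex

end

theorem stmt_14_general (F₀ F₁ : ℚ → Type u) [∀ q, LinearOrder (F₀ q)] [∀ q, LinearOrder (F₁ q)]
    (h₀ne : ∀ q, Nonempty (F₀ q))
    (h₀sc : ∀ q, ¬ Nonempty (ℚ ↪o F₀ q))
    (h₁ne : ∀ q, Nonempty (F₁ q))
    (h₁sc : ∀ q, ¬ Nonempty (ℚ ↪o F₁ q))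
    (h₀dense : ∀ q₀ a b : ℚ, a < b → ∃ q, a < q ∧ q < b ∧ Nonempty (F₀ q ≃o F₀ q₀))
    (h₁dense : ∀ q₀ a b : ℚ, a < b → ∃ q, a < q ∧ q < b ∧ Nonempty (F₁ q ≃o F₁ q₀)) :
    Nonempty (Lex ((q : ℚ) × F₀ q) ≃o Lex ((q : ℚ) × F₁ q)) ↔
      ((∀ q : ℚ, ∃ q' : ℚ, Nonempty (F₀ q ≃o F₁ q')) ∧
        (∀ q' : ℚ, ∃ q : ℚ, Nonempty (F₀ q ≃o F₁ q'))) := by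
  constructor
  · rintro ⟨e⟩
    refine ⟨Sigma.Lex.exists_orderIso_fiber h₀ne h₁ne h₀sc h₁sc e, fun q' => ?_⟩
    obtain ⟨q, ⟨φ⟩⟩ := Sigma.Lex.exists_orderIso_fiber h₁ne h₀ne h₁sc h₀sc e.symm q'
    exact ⟨q, ⟨φ.symm⟩⟩
  · rintro ⟨h₀₁, h₁₀⟩
    have dense₀₁ (q a b : ℚ) (hab : a < b) :
        ∃ q', a < q' ∧ q' < b ∧ Nonempty (F₀ q ≃o F₁ q') := by
      obtain ⟨q', ⟨φ⟩⟩ := h₀₁ q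
      obtain ⟨r, har, hrb, ⟨ψ⟩⟩ := h₁dense q' a b hab
      exact ⟨r, har, hrb, ⟨φ.trans ψ.symm⟩⟩
    have dense₁₀ (q' a b : ℚ) (hab : a < b) :
        ∃ q, a < q ∧ q < b ∧ Nonempty (F₀ q ≃o F₁ q') := by
      obtain ⟨q, ⟨φ⟩⟩ := h₁₀ q'
      obtain ⟨r, har, hrb, ⟨ψ⟩⟩ := h₀dense q a b hab
      exact ⟨r, har, hrb, ⟨ψ.trans φ⟩⟩
    obtain ⟨g, hg⟩ := Order.exists_orderIso_forall_rel dense₀₁ dense₁₀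
    exact ⟨OrderIso.sigmaLexCongr g fun q => (hg q).some⟩

/-- For families of nonempty countable scattered orders indexed by `ℚ` whose isomorphism
classes appear densely, `η^{f₀} ≅ η^{f₁}` iff the two families realize the same orders
up to isomorphism. -/
theorem stmt_14 (F₀ F₁ : ℚ → Type u) [∀ q, LinearOrder (F₀ q)] [∀ q, LinearOrder (F₁ q)]
    (h₀ne : ∀ q, Nonempty (F₀ q)) (h₀ct : ∀ q, Countable (F₀ q))
    (h₀sc : ∀ q, ¬ Nonempty (ℚ ↪o F₀ q))
    (h₁ne : ∀ q, Nonempty (F₁ q)) (h₁ct : ∀ q, Countable (F₁ q))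
    (h₁sc : ∀ q, ¬ Nonempty (ℚ ↪o F₁ q))
    (h₀dense : ∀ q₀ a b : ℚ, a < b → ∃ q, a < q ∧ q < b ∧ Nonempty (F₀ q ≃o F₀ q₀))
    (h₁dense : ∀ q₀ a b : ℚ, a < b → ∃ q, a < q ∧ q < b ∧ Nonempty (F₁ q ≃o F₁ q₀)) :
    Nonempty (Lex ((q : ℚ) × F₀ q) ≃o Lex ((q : ℚ) × F₁ q)) ↔
      ((∀ q : ℚ, ∃ q' : ℚ, Nonempty (F₀ q ≃o F₁ q')) ∧
        (∀ q' : ℚ, ∃ q : ℚ, Nonempty (F₀ q ≃o F₁ q'))) :=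
  stmt_14_general F₀ F₁ h₀ne h₀sc h₁ne h₁sc h₀dense h₁dense
end

section
/- The family {L ∈ Lin : L embeds into ℤ^γ} is closed under convex sums, for every countable ordinal γ. That is: if K and K' both embed into ℤ^γ, and (K'_k)_{k∈K} is a family of nonempty convex subsets of K' with K'_{k₀} ≤ K'_{k₁} whenever k₀ <_K k₁, then Σ_{k∈K} K'_k embeds into ℤ^γ. -/
/-!
Write `FinCond β` for the `β`-th iterated finite condensation of a linear order, which identifies
`x` and `y` when the interval between them meets only finitely many classes of some earlier
condensation. On `ℤ^γ` the relation `FinCond γ` is total: the interval between two points meets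
finitely many values at the leading coordinate where they differ, and points sharing that value
differ only at coordinates of smaller rank. Totality is reflected along order embeddings and, by
the ordering hypothesis, along the two monotone projections of the convex sum, so `FinCond γ` is
total on the sum, which is countable because `γ` is.

Conversely, by induction on `γ`, a countable linear order on which `FinCond γ` is total embeds
into `ℤ^γ`. At `β + 1` the `FinCond β`-classes form a discrete order, which embeds into `ℤ`; its
value is written at coordinate `β` and the class is embedded below it. At a limit `γ`, fix a base
point and levels `βₙ < γ` increasing to exhaust the order; the `n`-th shell on the left (right)
of the base point is marked by `-1` (`+1`) at coordinate `βₙ`, and embedded below it.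
-/

open Set

def FinCond {L : Type*} [LinearOrder L] (β : Ordinal) (x y : L) : Prop :=
  x = y ∨ ∃ β' : Iio β, ∃ F : Finset L, ∀ z ∈ uIcc x y, ∃ w ∈ F, FinCond β'.1 z w
termination_by β
decreasing_by exact β'.2

theorem finCond_iff {L : Type*} [LinearOrder L] {β : Ordinal} {x y : L} : FinCond β x y ↔
    x = y ∨ ∃ β' < β, ∃ F : Finset L, ∀ z ∈ uIcc x y, ∃ w ∈ F, FinCond β' z w := by
  rw [FinCond]
  simp only [Subtype.exists, mem_Iio, exists_prop]

namespace FinCond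

variable {L M N : Type*} [LinearOrder L] [LinearOrder M] [LinearOrder N]
  {β β' : Ordinal} {x y z : L}

@[refl] theorem refl (β : Ordinal) (x : L) : FinCond β x x := finCond_iff.2 (.inl rfl)

theorem of_cover (hβ : β' < β) (F : Finset L) (hF : ∀ z ∈ uIcc x y, ∃ w ∈ F, FinCond β' z w) :
    FinCond β x y :=
  finCond_iff.2 (.inr ⟨β', hβ, F, hF⟩)

@[symm] theorem symm (h : FinCond β x y) : FinCond β y x := by
  rw [finCond_iff] at h ⊢
  rw [uIcc_comm]
  exact h.imp Eq.symm id

theorem mono (hβ : β ≤ β') (h : FinCond β x y) : FinCond β' x y := by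
  obtain rfl | ⟨β₀, hβ₀, F, hF⟩ := finCond_iff.1 h
  · exact refl _ _
  · exact of_cover (hβ₀.trans_le hβ) F hF

theorem trans (hxy : FinCond β x y) (hyz : FinCond β y z) : FinCond β x z := by
  obtain rfl | ⟨β₁, hβ₁, F₁, hF₁⟩ := finCond_iff.1 hxy
  · exact hyz
  obtain rfl | ⟨β₂, hβ₂, F₂, hF₂⟩ := finCond_iff.1 hyz
  · exact hxy
  classical
  refine of_cover (max_lt hβ₁ hβ₂) (F₁ ∪ F₂) fun t ht => ?_
  rcases uIcc_subset_uIcc_union_uIcc ht with ht | ht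
  · obtain ⟨w, hw, h⟩ := hF₁ t ht
    exact ⟨w, Finset.mem_union_left _ hw, h.mono (le_max_left _ _)⟩
  · obtain ⟨w, hw, h⟩ := hF₂ t ht
    exact ⟨w, Finset.mem_union_right _ hw, h.mono (le_max_right _ _)⟩

theorem of_mem_uIcc (h : FinCond β x y) (hz : z ∈ uIcc x y) : FinCond β x z := by
  obtain rfl | ⟨β₀, hβ₀, F, hF⟩ := finCond_iff.1 h
  · rw [uIcc_self, mem_singleton_iff] at hz
    rw [hz]
  · exact of_cover hβ₀ F fun t ht => hF t (uIcc_subset_uIcc_left hz ht)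

theorem eq_of_zero (h : FinCond 0 x y) : x = y :=
  (finCond_iff.1 h).resolve_right fun ⟨_, h, _⟩ => h.not_ge zero_le

theorem pos_of_ne (h : FinCond β x y) (hxy : x ≠ y) : 0 < β := by
  obtain rfl | ⟨β₀, hβ₀, -⟩ := finCond_iff.1 h
  · exact absurd rfl hxy
  · exact hβ₀.trans_le' zero_le

theorem exists_cover (h : FinCond β x y) (hβ : 0 < β) :
    ∃ β' < β, ∃ F : Finset L, ∀ z ∈ uIcc x y, ∃ w ∈ F, FinCond β' z w := by
  obtain rfl | h := finCond_iff.1 h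
  · exact ⟨0, hβ, {x}, fun z hz => ⟨x, Finset.mem_singleton_self x, by
      rw [uIcc_self, mem_singleton_iff] at hz
      rw [hz]⟩⟩
  · exact h

theorem of_mem_uIcc' (h : FinCond β x y) (hz : z ∈ uIcc x y) : FinCond β z y :=
  (h.of_mem_uIcc hz).symm.trans h

theorem exists_lt_of_isSuccLimit {γ : Ordinal} (hγ : Order.IsSuccLimit γ) (h : FinCond γ x y) :
    ∃ β < γ, FinCond β x y := by
  obtain ⟨β, hβ, F, hF⟩ := h.exists_cover hγ.pos
  exact ⟨Order.succ β, hγ.succ_lt hβ, of_cover (Order.lt_succ β) F hF⟩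

-- Picking one representative per index turns `F` into a cover of `[[x, y]]`.
theorem of_finite_cover {ι : Type*} (hβ : β' < β) (F : Finset ι) (R : L → ι → Prop)
    (hR : ∀ z ∈ uIcc x y, ∃ i ∈ F, R z i)
    (hRcon : ∀ z ∈ uIcc x y, ∀ w ∈ uIcc x y, ∀ i, R z i → R w i → FinCond β' z w) :
    FinCond β x y := by
  classical
  let rep (i : ι) : L := if h : ∃ w ∈ uIcc x y, R w i then h.choose else x
  refine of_cover hβ (F.image rep) fun z hz => ?_
  obtain ⟨i, hi, hzi⟩ := hR z hz
  have h : ∃ w ∈ uIcc x y, R w i := ⟨z, hz, hzi⟩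
  refine ⟨rep i, Finset.mem_image_of_mem _ hi, ?_⟩
  simp only [rep, dif_pos h]
  exact hRcon z hz _ h.choose_spec.1 i hzi h.choose_spec.2

theorem lt_of_lt_of_not {x' y' : L} (hxy : x < y) (hne : ¬FinCond β x y) (hx : FinCond β x x')
    (hy : FinCond β y y') : x' < y' := by
  by_contra! h
  rcases le_or_gt y x' with hyx | hxy'
  · exact hne (hx.of_mem_uIcc (mem_uIcc.2 (.inl ⟨hxy.le, hyx⟩)))
  · exact hne (hx.trans (hy.of_mem_uIcc (mem_uIcc.2 (.inr ⟨h, hxy'.le⟩))).symm)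

theorem of_monotone_pair {f : L → M} {g : L → N} (hf : Monotone f) (hg : Monotone g)
    (hfg : ∀ x y, f x = f y → g x = g y → x = y) :
    ∀ {x y : L}, FinCond β (f x) (f y) → FinCond β (g x) (g y) → FinCond β x y := by
  induction β using WellFoundedLT.induction with
  | _ β IH =>
  intro x y h₁ h₂
  by_cases hxy : x = y
  · rw [hxy]
  have hβ : 0 < β := by
    by_cases hfxy : f x = f y
    · exact h₂.pos_of_ne fun hgxy => hxy (hfg x y hfxy hgxy)
    · exact h₁.pos_of_ne hfxy
  obtain ⟨β₁, hβ₁, F₁, hF₁⟩ := h₁.exists_cover hβ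
  obtain ⟨β₂, hβ₂, F₂, hF₂⟩ := h₂.exists_cover hβ
  refine of_finite_cover (max_lt hβ₁ hβ₂) (F₁ ×ˢ F₂)
    (fun z w => FinCond (max β₁ β₂) (f z) w.1 ∧ FinCond (max β₁ β₂) (g z) w.2) ?_ ?_
  · intro z hz
    obtain ⟨w₁, hw₁, hz₁⟩ := hF₁ (f z) (hf.mapsTo_uIcc hz)
    obtain ⟨w₂, hw₂, hz₂⟩ := hF₂ (g z) (hg.mapsTo_uIcc hz)
    exact ⟨(w₁, w₂), Finset.mem_product.2 ⟨hw₁, hw₂⟩,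
      hz₁.mono (le_max_left _ _), hz₂.mono (le_max_right _ _)⟩
  · rintro z - w - i ⟨hz₁, hz₂⟩ ⟨hw₁, hw₂⟩
    exact IH _ (max_lt hβ₁ hβ₂) (hz₁.trans hw₁.symm) (hz₂.trans hw₂.symm)

theorem of_orderEmbedding (e : L ↪o M) (h : FinCond β (e x) (e y)) : FinCond β x y :=
  of_monotone_pair e.monotone e.monotone (fun _ _ h _ => e.injective h) h h

theorem sigmaLex {K K' : Type*} [LinearOrder K] [LinearOrder K'] {P : K → Set K'}
    (hP : ∀ k₀ k₁ : K, k₀ < k₁ → ∀ a ∈ P k₀, ∀ b ∈ P k₁, a ≤ b) {β : Ordinal}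
    (hK : ∀ x y : K, FinCond β x y) (hK' : ∀ x y : K', FinCond β x y)
    (p q : Σₗ k, P k) : FinCond β p q := by
  have hfst : Monotone fun p : Σₗ k, P k => (ofLex p).1 := by
    rintro ⟨k, a⟩ ⟨l, b⟩ (⟨_, _, hkl⟩ | ⟨_, _, -⟩)
    · exact hkl.le
    · exact le_rfl
  have hsnd : Monotone fun p : Σₗ k, P k => ((ofLex p).2 : K') := by
    rintro ⟨k, a⟩ ⟨l, b⟩ (⟨_, _, hkl⟩ | ⟨_, _, hab⟩)
    · exact hP k l hkl a a.2 b b.2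
    · exact hab
  exact of_monotone_pair hfst hsnd (fun p q h₁ h₂ => Sigma.subtype_ext h₁ h₂)
    (hK _ _) (hK' _ _)

end FinCond

namespace Finsupp.Lex

variable {α N : Type*} [LinearOrder α] [LinearOrder N] [Zero N] {x y z : Lex (α →₀ N)} {j : α}

theorem apply_le_apply_of_le (hxy : x ≤ y) (h : ∀ i < j, ofLex x i = ofLex y i) :
    ofLex x j ≤ ofLex y j := by
  obtain rfl | hlt := hxy.eq_or_lt
  · exact le_rfl
  obtain ⟨i, hi, hxyi⟩ := Finsupp.Lex.lt_iff.1 hlt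
  rcases lt_trichotomy i j with hij | rfl | hji
  · exact absurd (h i hij) hxyi.ne
  · exact hxyi.le
  · exact (hi j hji).le

theorem apply_eq_of_le_of_le (hxz : x ≤ z) (hzy : z ≤ y) (h : ∀ i < j, ofLex x i = ofLex y i) :
    ∀ i < j, ofLex z i = ofLex x i := by
  obtain rfl | hlt := hxz.eq_or_lt
  · exact fun _ _ => rfl
  obtain ⟨k, hk, hxzk⟩ := Finsupp.Lex.lt_iff.1 hlt
  have hjk : j ≤ k := by
    by_contra! hkj
    have hzy' := apply_le_apply_of_le hzy fun i hi => (hk i hi).symm.trans (h i (hi.trans hkj))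
    exact (hxzk.trans_le (hzy'.trans_eq (h k hkj).symm)).false
  exact fun i hi => (hk i (hi.trans_le hjk)).symm

end Finsupp.Lex

theorem finCond_of_rank {α : Type*} [LinearOrder α] (rk : α → Ordinal) (hrk : StrictAnti rk) :
    ∀ (o : Ordinal) (x y : Lex (α →₀ ℤ)),
      (∀ δ, ofLex x δ ≠ ofLex y δ → rk δ < o) → FinCond o x y := by
  intro o
  induction o using WellFoundedLT.induction with
  | _ o IH =>
  suffices key : ∀ x y : Lex (α →₀ ℤ), x ≤ y →
      (∀ δ, ofLex x δ ≠ ofLex y δ → rk δ < o) → FinCond o x y by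
    intro x y h
    rcases le_total x y with hxy | hyx
    · exact key x y hxy h
    · exact (key y x hyx fun δ hδ => h δ hδ.symm).symm
  intro x y hxy h
  obtain rfl | hlt := hxy.eq_or_lt
  · rfl
  obtain ⟨m, hm, hxym⟩ := Finsupp.Lex.lt_iff.1 hlt
  have agree : ∀ z ∈ uIcc x y, ∀ i < m, ofLex z i = ofLex x i := fun z hz => by
    rw [uIcc_of_le hxy] at hz
    exact Finsupp.Lex.apply_eq_of_le_of_le hz.1 hz.2 hm
  refine FinCond.of_finite_cover (h m hxym.ne) (Finset.Icc (ofLex x m) (ofLex y m))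
    (fun z v => ofLex z m = v) (fun z hz => ⟨_, ?_, rfl⟩) ?_
  · have hz' := hz
    rw [uIcc_of_le hxy] at hz'
    exact Finset.mem_Icc.2
      ⟨Finsupp.Lex.apply_le_apply_of_le hz'.1 fun i hi => (agree z hz i hi).symm,
        Finsupp.Lex.apply_le_apply_of_le hz'.2 fun i hi => (agree z hz i hi).trans (hm i hi)⟩
  · rintro z hz w hw v rfl hwz
    refine IH _ (h m hxym.ne) z w fun δ hδ => ?_
    rcases lt_trichotomy δ m with hδm | rfl | hmδ
    · exact absurd ((agree z hz δ hδm).trans (agree w hw δ hδm).symm) hδ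
    · exact absurd hwz.symm hδ
    · exact hrk hmδ

/-- `ℤ^γ`. Lexicographic order compares at the least index where two functions differ, so the
coordinates are indexed by `γᵒᵈ` to make larger ordinals more significant. -/
abbrev IntPow (γ : Ordinal) := Lex ((γ.ToType)ᵒᵈ →₀ ℤ)

theorem countable_intPow {γ : Ordinal} (hγ : γ.card ≤ Cardinal.aleph0) :
    Countable (IntPow γ) := by
  have : Countable γ.ToType := Cardinal.mk_le_aleph0_iff.1 ((Cardinal.mk_toType γ).trans_le hγ)
  have : Countable (γ.ToType)ᵒᵈ := this
  exact inferInstanceAs (Countable ((γ.ToType)ᵒᵈ →₀ ℤ))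

theorem finCond_intPow (γ : Ordinal) (x y : IntPow γ) : FinCond γ x y :=
  finCond_of_rank (fun δ => Ordinal.ToType.mk.symm (OrderDual.ofDual δ))
    (fun _ _ h => Ordinal.ToType.mk.symm.strictMono h) γ x y
    fun δ _ => (Ordinal.ToType.mk.symm (OrderDual.ofDual δ)).2

section Pack

variable {α σ σ' : Type*} [LinearOrder α] [LinearOrder σ] [LinearOrder σ']
  {m m' : α} {s s' : ℤ} {ι : σ ↪o α} {ι' : σ' ↪o α} {f g : Lex (σ →₀ ℤ)} {g' : Lex (σ' →₀ ℤ)}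

noncomputable def pack (m : α) (s : ℤ) (ι : σ ↪o α) (f : Lex (σ →₀ ℤ)) : Lex (α →₀ ℤ) :=
  toLex (Finsupp.single m s + Finsupp.embDomain ι.toEmbedding (ofLex f))

theorem pack_apply_of_lt (hm : ∀ t, m < ι t) {j : α} (hj : j < m) :
    ofLex (pack m s ι f) j = 0 := by
  have hj' : j ∉ Set.range ι.toEmbedding := by
    rintro ⟨t, rfl⟩
    exact (hj.trans (hm t)).false
  simp [pack, hj.ne', Finsupp.embDomain_of_notMem_range _ _ _ hj']

theorem pack_apply_marker (hm : ∀ t, m < ι t) : ofLex (pack m s ι f) m = s := by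
  have hm' : m ∉ Set.range ι.toEmbedding := by
    rintro ⟨t, ht⟩
    exact (hm t).ne' ht
  simp [pack, Finsupp.embDomain_of_notMem_range _ _ _ hm']

theorem pack_lt_pack_right (h : f < g) : pack m s ι f < pack m s ι g := by
  obtain ⟨k, hk, hfgk⟩ := Finsupp.Lex.lt_iff.1 h
  refine Finsupp.Lex.lt_iff.2 ⟨ι k, fun j hj => ?_, ?_⟩
  · show Finsupp.single m s j + Finsupp.embDomain ι.toEmbedding (ofLex f) j =
      Finsupp.single m s j + Finsupp.embDomain ι.toEmbedding (ofLex g) j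
    by_cases hj' : j ∈ Set.range ι.toEmbedding
    · obtain ⟨t, rfl⟩ := hj'
      rw [Finsupp.embDomain_apply_self, Finsupp.embDomain_apply_self]
      exact congrArg _ (hk t (ι.lt_iff_lt.1 hj))
    · simp only [Finsupp.embDomain_of_notMem_range _ _ _ hj']
  · show Finsupp.single m s _ + Finsupp.embDomain ι.toEmbedding (ofLex f) (ι.toEmbedding k) <
      Finsupp.single m s _ + Finsupp.embDomain ι.toEmbedding (ofLex g) (ι.toEmbedding k)
    rw [Finsupp.embDomain_apply_self, Finsupp.embDomain_apply_self]
    exact add_lt_add_right hfgk _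

theorem pack_lt_pack (hm : ∀ t, m < ι t) (hm' : ∀ t, m' < ι' t)
    (h : (m = m' ∧ s < s') ∨ (m' < m ∧ 0 < s') ∨ (m < m' ∧ s < 0)) :
    pack m s ι f < pack m' s' ι' g' := by
  rcases h with ⟨rfl, hss⟩ | ⟨hmm, hs'⟩ | ⟨hmm, hs⟩
  · refine Finsupp.Lex.lt_iff.2 ⟨m, fun j hj => ?_, ?_⟩
    · exact (pack_apply_of_lt hm hj).trans (pack_apply_of_lt hm' hj).symm
    · exact (pack_apply_marker hm).trans_lt (hss.trans_eq (pack_apply_marker hm').symm)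
  · refine Finsupp.Lex.lt_iff.2 ⟨m', fun j hj => ?_, ?_⟩
    · exact (pack_apply_of_lt hm (hj.trans hmm)).trans (pack_apply_of_lt hm' hj).symm
    · exact (pack_apply_of_lt hm hmm).trans_lt (hs'.trans_eq (pack_apply_marker hm').symm)
  · refine Finsupp.Lex.lt_iff.2 ⟨m, fun j hj => ?_, ?_⟩
    · exact (pack_apply_of_lt hm hj).trans (pack_apply_of_lt hm' (hj.trans hmm)).symm
    · exact (pack_apply_marker hm).trans_lt (hs.trans_eq (pack_apply_of_lt hm' hmm).symm)

noncomputable def sigmaLexPack {I : Type*} [LinearOrder I] {σ : I → Type*}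
    [∀ i, LinearOrder (σ i)]
    (m : I → α) (s : I → ℤ) (ι : ∀ i, σ i ↪o α) (hm : ∀ i t, m i < ι i t)
    (hms : ∀ i j, i < j →
      (m i = m j ∧ s i < s j) ∨ (m j < m i ∧ 0 < s j) ∨ (m i < m j ∧ s i < 0)) :
    (Σₗ i, Lex (σ i →₀ ℤ)) ↪o Lex (α →₀ ℤ) :=
  OrderEmbedding.ofStrictMono
    (fun p => pack (m (ofLex p).1) (s (ofLex p).1) (ι (ofLex p).1) (ofLex p).2) <| by
      rintro ⟨i, f⟩ ⟨j, g⟩ (⟨_, _, hij⟩ | ⟨_, _, hfg⟩)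
      · exact pack_lt_pack (hm i) (hm j) (hms i j hij)
      · exact pack_lt_pack_right hfg

end Pack

noncomputable def OrderEmbedding.sigmaLexOfMonotone {L I : Type*} [LinearOrder L]
    [LinearOrder I] {M : I → Type*} [∀ i, LinearOrder (M i)] (q : L → I) (hq : Monotone q)
    (e : ∀ i, {x // q x = i} ↪o M i) : L ↪o Σₗ i, M i :=
  OrderEmbedding.ofStrictMono (fun x => toLex ⟨q x, e (q x) ⟨x, rfl⟩⟩) fun x y hxy => by
    obtain hlt | heq := (hq hxy.le).lt_or_eq
    · exact Sigma.Lex.left _ _ hlt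
    · have key : ∀ i j (hij : i = j) (hx : q x = i) (hy : q y = j),
          (toLex ⟨i, e i ⟨x, hx⟩⟩ : Σₗ i, M i) < toLex ⟨j, e j ⟨y, hy⟩⟩ := by
        rintro i _ rfl hx hy
        exact Sigma.Lex.right _ _ ((e i).lt_iff_lt.2 hxy)
      exact key _ _ heq rfl rfl

theorem Ordinal.exists_toType_dual_embedding {β γ : Ordinal} (h : β < γ) :
    ∃ ι : (β.ToType)ᵒᵈ ↪o (γ.ToType)ᵒᵈ, ∀ t, OrderDual.toDual (ToType.mk ⟨β, h⟩) < ι t := by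
  let ι₀ : β.ToType ↪o γ.ToType := OrderEmbedding.ofStrictMono
    (fun t => ToType.mk ⟨ToType.mk.symm t, (Set.mem_Iio.1 (ToType.mk.symm t).2).trans h⟩)
    fun a b hab => ToType.mk.strictMono (ToType.mk.symm.strictMono hab)
  exact ⟨ι₀.dual, fun t => ToType.mk.strictMono (ToType.mk.symm t).2⟩

theorem exists_sigmaLex_embedding_intPow {I : Type*} [LinearOrder I] {γ : Ordinal}
    (lvl : I → Ordinal) (hlvl : ∀ i, lvl i < γ) (s : I → ℤ)
    (hs : ∀ i j, i < j → (lvl i = lvl j ∧ s i < s j) ∨ (lvl i < lvl j ∧ 0 < s j) ∨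
      (lvl j < lvl i ∧ s i < 0)) :
    Nonempty ((Σₗ i, IntPow (lvl i)) ↪o IntPow γ) := by
  choose ι hι using fun i => Ordinal.exists_toType_dual_embedding (hlvl i)
  refine ⟨sigmaLexPack (fun i => OrderDual.toDual (Ordinal.ToType.mk ⟨lvl i, hlvl i⟩)) s ι hι
    fun i j hij => ?_⟩
  simp only [OrderDual.toDual_lt_toDual, EmbeddingLike.apply_eq_iff_eq, OrderIso.lt_iff_lt]
  exact (hs i j hij).imp (And.imp_left Subtype.ext) id

theorem exists_orderEmbedding_int_of_finite_Icc {T : Type*} [LinearOrder T]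
    (h : ∀ a b : T, (Icc a b).Finite) : Nonempty (T ↪o ℤ) := by
  rcases isEmpty_or_nonempty T with hT | ⟨⟨x₀⟩⟩
  · exact ⟨OrderEmbedding.ofIsEmpty⟩
  let := LocallyFiniteOrder.ofFiniteIcc h
  let := LinearLocallyFiniteOrder.succOrder T
  let := LinearLocallyFiniteOrder.predOrder T
  exact ⟨OrderEmbedding.ofStrictMono (toZ x₀) toZ_strictMono⟩

theorem Order.IsSuccLimit.exists_strictMono_ge {α : Type*} [LinearOrder α] [SuccOrder α]
    {γ : α} (hγ : IsSuccLimit γ) (b : ℕ → α) (hb : ∀ n, b n < γ) :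
    ∃ a : ℕ → α, StrictMono a ∧ (∀ n, a n < γ) ∧ ∀ n, b n ≤ a n := by
  let a : ℕ → α := fun n => Nat.rec (b 0) (fun k ak => max (succ ak) (b (k + 1))) n
  have ha : ∀ n, a n < γ := by
    intro n
    induction n with
    | zero => exact hb 0
    | succ n ih => exact max_lt (hγ.succ_lt ih) (hb _)
  refine ⟨a, strictMono_nat_of_lt_succ fun n => ?_, ha, fun n => ?_⟩
  · exact (lt_succ_of_not_isMax (ha n).not_isMax).trans_le (le_max_left _ _)
  · cases n with
    | zero => exact le_rfl
    | succ n => exact le_max_right _ _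

section Levels

variable {L : Type*} [LinearOrder L]

theorem exists_monotone_int_of_finCond_add_one {β : Ordinal}
    (hL : ∀ x y : L, FinCond (β + 1) x y) :
    ∃ q : L → ℤ, Monotone q ∧ ∀ x y, q x = q y → FinCond β x y := by
  let S : Setoid L := ⟨FinCond β, ⟨FinCond.refl β, FinCond.symm, FinCond.trans⟩⟩
  let rep (x : L) : L := (Quotient.mk S x).out
  have hrep (x : L) : FinCond β (rep x) x := Quotient.mk_out (s := S) x
  have hrep_eq {x y : L} (h : FinCond β x y) : rep x = rep y :=
    congrArg Quotient.out (Quotient.sound (s := S) h)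
  let q (x : L) : range rep := ⟨rep x, x, rfl⟩
  have hq : Monotone q := fun x y hxy => by
    by_cases hxy' : FinCond β x y
    · exact (hrep_eq hxy').le
    · exact (FinCond.lt_of_lt_of_not (hxy.lt_of_ne fun e => hxy' (e ▸ FinCond.refl β x)) hxy'
        (hrep x).symm (hrep y).symm).le
  have hfin : ∀ a b : range rep, (Icc a b).Finite := by
    intro a b
    obtain ⟨β', hβ', F, hF⟩ := (hL a b).exists_cover (Order.lt_add_one_iff.2 zero_le)
    refine ((F.finite_toSet.image rep).preimage Subtype.val_injective.injOn).subset
      fun c hc => ?_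
    obtain ⟨z, hz⟩ := c.2
    obtain ⟨w, hw, hcw⟩ := hF c (Icc_subset_uIcc hc)
    refine ⟨w, hw, ?_⟩
    rw [← hrep_eq (hcw.mono (Order.lt_add_one_iff.1 hβ')), ← hz]
    exact hrep_eq (hrep z)
  obtain ⟨e⟩ := exists_orderEmbedding_int_of_finite_Icc hfin
  refine ⟨e ∘ q, e.monotone.comp hq, fun x y hxy => ?_⟩
  have hxy' : rep x = rep y := congrArg Subtype.val (e.injective hxy)
  exact (hrep x).symm.trans (hxy' ▸ hrep y)

theorem exists_monotone_int_of_finCond_isSuccLimit [Countable L] {γ : Ordinal}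
    (hγ : Order.IsSuccLimit γ) (hL : ∀ x y : L, FinCond γ x y) (z₀ : L) :
    ∃ (q : L → ℤ) (β : ℕ → Ordinal), Monotone q ∧ StrictMono β ∧ (∀ n, β n < γ) ∧
      ∀ x y, q x = q y → FinCond (β (q x).natAbs) x y := by
  have : Nonempty L := ⟨z₀⟩
  obtain ⟨u, hu⟩ := exists_surjective_nat L
  choose b hb hub using fun n => (hL (u n) z₀).exists_lt_of_isSuccLimit hγ
  obtain ⟨β, hβ, hβγ, hbβ⟩ := hγ.exists_strictMono_ge b hb
  have hex (x : L) : ∃ n, FinCond (β n) x z₀ := by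
    obtain ⟨n, rfl⟩ := hu x
    exact ⟨n, (hub n).mono (hbβ n)⟩
  classical
  let level (x : L) : ℕ := Nat.find (hex x)
  have hlevel (x : L) : FinCond (β (level x)) x z₀ := Nat.find_spec (hex x)
  have hlevel_le {x : L} {n : ℕ} (h : FinCond (β n) x z₀) : level x ≤ n := Nat.find_min' _ h
  let q (x : L) : ℤ := if x < z₀ then -level x else level x
  have hq_natAbs (x : L) : (q x).natAbs = level x := by
    by_cases hx : x < z₀ <;> simp [q, hx]
  refine ⟨q, β, fun x y hxy => ?_, hβ, hβγ, fun x y hxy => ?_⟩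
  · by_cases hx : x < z₀ <;> by_cases hy : y < z₀ <;>
      simp only [q, hx, hy, if_true, if_false]
    · have := hlevel_le ((hlevel x).of_mem_uIcc' (mem_uIcc.2 (.inl ⟨hxy, hy.le⟩)))
      omega
    · omega
    · exact absurd (hy.trans_le' hxy) hx
    · have := hlevel_le ((hlevel y).of_mem_uIcc' (mem_uIcc.2 (.inr ⟨not_lt.1 hx, hxy⟩)))
      omega
  · rw [hq_natAbs]
    have hl : level x = level y := by rw [← hq_natAbs, ← hq_natAbs, hxy]
    exact (hlevel x).trans (hl ▸ hlevel y).symm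

end Levels

def IntPowUniversal (β : Ordinal.{0}) : Prop :=
  ∀ (L : Type) [LinearOrder L] [Countable L], (∀ x y : L, FinCond β x y) →
    Nonempty (L ↪o IntPow β)

namespace IntPowUniversal

theorem embedding_subtype {β : Ordinal.{0}} (h : IntPowUniversal β) {L : Type} [LinearOrder L]
    [Countable L] (p : L → Prop) (hp : ∀ x y, p x → p y → FinCond β x y) :
    Nonempty ({x // p x} ↪o IntPow β) :=
  h _ fun x y => FinCond.of_orderEmbedding (OrderEmbedding.subtype p) (hp x y x.2 y.2)

theorem add_one {β : Ordinal.{0}} (h : IntPowUniversal β) : IntPowUniversal (β + 1) := by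
  intro L _ _ hL
  obtain ⟨q, hq, hqβ⟩ := exists_monotone_int_of_finCond_add_one hL
  obtain ⟨E⟩ := exists_sigmaLex_embedding_intPow (fun _ : ℤ => β)
    (fun _ => Order.lt_add_one_iff.2 le_rfl) id fun i j hij => .inl ⟨rfl, hij⟩
  exact ⟨(OrderEmbedding.sigmaLexOfMonotone q hq fun i =>
    (h.embedding_subtype _ fun x y hx hy => hqβ x y (hx.trans hy.symm)).some).trans E⟩

theorem of_isSuccLimit {γ : Ordinal.{0}} (hγ : Order.IsSuccLimit γ)
    (h : ∀ β < γ, IntPowUniversal β) : IntPowUniversal γ := by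
  intro L _ _ hL
  rcases isEmpty_or_nonempty L with hL₀ | ⟨⟨z₀⟩⟩
  · exact ⟨OrderEmbedding.ofIsEmpty⟩
  obtain ⟨q, β, hq, hβ, hβγ, hqβ⟩ := exists_monotone_int_of_finCond_isSuccLimit hγ hL z₀
  obtain ⟨E⟩ := exists_sigmaLex_embedding_intPow (fun i : ℤ => β i.natAbs) (fun _ => hβγ _)
    Int.sign fun i j hij => by
      rcases lt_trichotomy i.natAbs j.natAbs with h' | h' | h'
      · exact .inr (.inl ⟨hβ h', by rw [Int.sign_eq_one_of_pos (by omega)]; omega⟩)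
      · refine .inl ⟨congrArg β h', ?_⟩
        rw [Int.sign_eq_neg_one_of_neg (by omega), Int.sign_eq_one_of_pos (by omega)]
        omega
      · exact .inr (.inr ⟨hβ h', by rw [Int.sign_eq_neg_one_of_neg (by omega)]; omega⟩)
  exact ⟨(OrderEmbedding.sigmaLexOfMonotone q hq fun i =>
    ((h _ (hβγ i.natAbs)).embedding_subtype _ fun x y hx hy =>
      hx ▸ hqβ x y (hx.trans hy.symm)).some).trans E⟩

end IntPowUniversal

theorem intPowUniversal (γ : Ordinal.{0}) : IntPowUniversal γ := by
  induction γ using Ordinal.limitRecOn with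
  | zero =>
    intro L _ _ hL
    exact ⟨OrderEmbedding.ofStrictMono (fun _ => 0) fun x y hxy =>
      absurd (hL x y).eq_of_zero hxy.ne⟩
  | add_one β IH => exact IH.add_one
  | limit γ hγ IH => exact IntPowUniversal.of_isSuccLimit hγ IH

theorem stmt_18_general (γ : Ordinal.{0}) (hγ : γ.card ≤ Cardinal.aleph0)
    (K K' : Type) [LinearOrder K] [LinearOrder K']
    (hK : Nonempty (K ↪o Lex ((γ.ToType)ᵒᵈ →₀ ℤ)))
    (hK' : Nonempty (K' ↪o Lex ((γ.ToType)ᵒᵈ →₀ ℤ)))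
    (P : K → Set K')
    (hmono : ∀ k₀ k₁ : K, k₀ < k₁ → ∀ a ∈ P k₀, ∀ b ∈ P k₁, a ≤ b) :
    Nonempty (Lex ((k : K) × ↥(P k)) ↪o Lex ((γ.ToType)ᵒᵈ →₀ ℤ)) := by
  obtain ⟨eK⟩ := hK
  obtain ⟨eK'⟩ := hK'
  have := countable_intPow hγ
  have : Countable K := eK.injective.countable
  have : Countable K' := eK'.injective.countable
  have : Countable (Σₗ k, P k) := inferInstanceAs (Countable ((k : K) × P k))
  exact intPowUniversal γ _ (FinCond.sigmaLex hmono
    (fun _ _ => (finCond_intPow γ _ _).of_orderEmbedding eK)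
    (fun _ _ => (finCond_intPow γ _ _).of_orderEmbedding eK'))

/-- The class of linear orders embeddable into `ℤ^γ` (finitely supported functions `γ → ℤ`
ordered by the value at the largest index where they differ) is closed under convex sums,
for every countable ordinal `γ`. -/
theorem stmt_18 (γ : Ordinal.{0}) (hγ : γ.card ≤ Cardinal.aleph0)
    (K K' : Type) [LinearOrder K] [LinearOrder K']
    (hK : Nonempty (K ↪o Lex ((γ.ToType)ᵒᵈ →₀ ℤ)))
    (hK' : Nonempty (K' ↪o Lex ((γ.ToType)ᵒᵈ →₀ ℤ)))
    (P : K → Set K') (hPne : ∀ k, (P k).Nonempty) (hPc : ∀ k, (P k).OrdConnected)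
    (hmono : ∀ k₀ k₁ : K, k₀ < k₁ → ∀ a ∈ P k₀, ∀ b ∈ P k₁, a ≤ b) :
    Nonempty (Lex ((k : K) × ↥(P k)) ↪o Lex ((γ.ToType)ᵒᵈ →₀ ℤ)) :=
  stmt_18_general γ hγ K K' hK hK' P hmono
end
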